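/- arXiv:2003.13553 — 3 statements merged into one kernel-verified Lean document; each statement's English description precedes it below -/
import Mathlib

section
/- Suppose 𝒜 is an essential, central hyperplane arrangement in a finite-dimensional complex vector space whose decomposition into irreducible factors has k factors, and let G=π₁(M(𝒜)). Then the center Z(G) contains a free abelian subgroup of rank k. -/
/-!
Write `V = W₁ ⊕ ⋯ ⊕ W_k` for the irreducible decomposition. Every hyperplane of `𝒜` contains all
summands but one, so multiplying the `W_i`-component by a nonzero scalar preserves `M(𝒜)`, and
rotating that component once around the circle is a self-homotopy of the identity of `M(𝒜)`.
The track of the base point under a self-homotopy of the identity commutes with every loop, so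
these `k` loops are central. They are independent: by essentiality some `H_i = ker f_i ∈ 𝒜` does
not contain `W_i`; then `f_i` maps the `j`-th loop to a constant loop for `j ≠ i` and to the circle
`t ↦ e^{2πit} f_i(x₀)` for `j = i`, whose class in `π₁(ℂ∖0)` has infinite order, as its
lift through `exp` shows.
-/

open CategoryTheory
open scoped FundamentalGroupoid Classical

noncomputable section

namespace CxArr

/-- The functor between fundamental groupoids induced by a continuous map, with
`Type`-valued spaces. -/
def toTopHom {X Y : Type} [TopologicalSpace X] [TopologicalSpace Y] (f : C(X, Y)) :
    TopCat.of X ⟶ TopCat.of Y := TopCat.ofHom f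

def indFunctor {X Y : Type} [TopologicalSpace X] [TopologicalSpace Y]
    (f : C(X, Y)) : FundamentalGroupoid X ⥤ FundamentalGroupoid Y :=
  πₘ (toTopHom f)

/-- The homomorphism induced by a continuous map on fundamental groups. -/
def indHom {X Y : Type} [TopologicalSpace X] [TopologicalSpace Y]
    (f : C(X, Y)) (x : X) :
    FundamentalGroup X x →* FundamentalGroup Y (f x) :=
  CategoryTheory.Functor.mapEnd ⟨x⟩ (indFunctor f)

attribute [local instance] Path.Homotopic.setoid

/-- The element of the fundamental group determined by a loop. -/
def loopElt {X : Type} [TopologicalSpace X] {x : X} (p : Path x x) :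
    FundamentalGroup X x :=
  FundamentalGroup.fromPath (X := TopCat.of X) ⟦p⟧

/-- Change of basepoint along a path. -/
def transport {X : Type} [TopologicalSpace X] {a b : X} (γ : Path a b) :
    FundamentalGroup X a ≃* FundamentalGroup X b :=
  FundamentalGroup.fundamentalGroupMulEquivOfPath γ

variable {V : Type} [NormedAddCommGroup V] [NormedSpace ℂ V] [FiniteDimensional ℂ V]

/-- The complement `M(𝒜)` of a (central) arrangement of subspaces. -/
def Mset (𝒜 : Finset (Submodule ℂ V)) : Set V := {x | ∀ H ∈ 𝒜, x ∉ H}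

/-- `E ∈ Q(𝒜)`: `E` is a (proper) intersection of hyperplanes of `𝒜`. -/
def QMem (𝒜 : Finset (Submodule ℂ V)) (E : Submodule ℂ V) : Prop :=
  ∃ S : Finset (Submodule ℂ V), S ⊆ 𝒜 ∧ S.Nonempty ∧ E = S.inf id

/-- The normal arrangement `𝒜_{V/E}` of the subspace `E` is reducible, i.e. splits as a
nontrivial direct sum.  (Expressed in `V`: there are `W₁, W₂` lying over `E` with
`W₁ ∩ W₂ = E`, `W₁ + W₂ = V`, both strictly bigger than `E`, so that every hyperplane of `𝒜`
containing `E` contains `W₁` or `W₂`.) -/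
def NormalReducible (𝒜 : Finset (Submodule ℂ V)) (E : Submodule ℂ V) : Prop :=
  ∃ W₁ W₂ : Submodule ℂ V, E ≤ W₁ ∧ E ≤ W₂ ∧ W₁ ⊓ W₂ = E ∧ W₁ ⊔ W₂ = ⊤ ∧
    W₁ ≠ E ∧ W₂ ≠ E ∧ ∀ H ∈ 𝒜, E ≤ H → (W₁ ≤ H ∨ W₂ ≤ H)

/-- `E` is an irreducible subspace of the arrangement `𝒜`. -/
def IrredSub (𝒜 : Finset (Submodule ℂ V)) (E : Submodule ℂ V) : Prop :=
  QMem 𝒜 E ∧ ¬ NormalReducible 𝒜 E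

/-- A decomposition `𝒜 ≅ 𝒜₁ ⊕ ⋯ ⊕ 𝒜_k` of an arrangement into `k` irreducible factors,
along the internal direct sum decomposition `V = W 1 ⊕ ⋯ ⊕ W k`. -/
def IrredDecomp (𝒜 : Finset (Submodule ℂ V)) (k : ℕ) (W : Fin k → Submodule ℂ V) : Prop :=
  DirectSum.IsInternal W ∧ (∀ i, W i ≠ ⊥) ∧
  (∀ H ∈ 𝒜, ∃ i, ∀ j, j ≠ i → W j ≤ H) ∧
  (∀ i, ¬ ∃ U₁ U₂ : Submodule ℂ V, U₁ ≤ W i ∧ U₂ ≤ W i ∧ U₁ ⊔ U₂ = W i ∧ U₁ ⊓ U₂ = ⊥ ∧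
    U₁ ≠ ⊥ ∧ U₂ ≠ ⊥ ∧
    ∀ H ∈ 𝒜, ¬ W i ≤ H → (∀ j, j ≠ i → W j ≤ H) → (U₁ ≤ H ∨ U₂ ≤ H))

/-- The complement of the normal arrangement `𝒜_{V/E}`, realized inside a linear
complement `W` of `E` in `V`. -/
def MW (𝒜 : Finset (Submodule ℂ V)) (E W : Submodule ℂ V) : Set ↥W :=
  {w : ↥W | ∀ H ∈ 𝒜, E ≤ H → (w : V) ∉ H}

/-- `P` is the parabolic subgroup of `π₁(M(𝒜), x₀)` of type `E` determined by some choice of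
normal-disk embedding `i : M(𝒜_{V/E}) → M(𝒜)` and connecting path `γ`, and `Z` is the
corresponding central `ℤ`-subgroup (generated by the image of the Hopf fiber). -/
def IsParabolicPair (𝒜 : Finset (Submodule ℂ V)) (E : Submodule ℂ V) (x₀ : ↥(Mset 𝒜))
    (P Z : Subgroup (FundamentalGroup ↥(Mset 𝒜) x₀)) : Prop :=
  ∃ (W : Submodule ℂ V), IsCompl E W ∧
  ∃ (p : V), p ∈ E ∧ (∀ H ∈ 𝒜, ¬ E ≤ H → p ∉ H) ∧
  ∃ (ε : ℝ), 0 < ε ∧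
  ∃ (i : C(↥(MW 𝒜 E W), ↥(Mset 𝒜))),
    (∀ w : ↥(MW 𝒜 E W), ((i w : V)) = p + (ε / (1 + ‖((w : ↥W) : V)‖)) • ((w : ↥W) : V)) ∧
  ∃ (w₀ : ↥(MW 𝒜 E W)) (γ : Path x₀ (i w₀)) (hopf : Path w₀ w₀),
    (∀ t : unitInterval,
      (((hopf t) : ↥W) : V) = Complex.exp (2 * Real.pi * Complex.I * ((t : ℝ) : ℂ)) •
        (((w₀ : ↥W) : V))) ∧
    P = Subgroup.map ((transport γ).symm.toMonoidHom.comp (indHom i w₀)) ⊤ ∧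
    Z = Subgroup.zpowers ((transport γ).symm (indHom i w₀ (loopElt hopf)))

end CxArr

open Complex

theorem Finset.exists_mem_not_le_of_inf_eq_bot {α β : Type*} [SemilatticeInf α] [BoundedOrder α]
    {s : Finset β} {f : β → α} (hs : s.inf f = ⊥) {a : α} (ha : a ≠ ⊥) : ∃ b ∈ s, ¬ a ≤ f b := by
  by_contra! h
  exact ha (le_bot_iff.mp (hs ▸ Finset.le_inf h))

section LinearAlgebra

variable {K V ι : Type*} [Field K] [AddCommGroup V] [Module K V] [DecidableEq ι]
  {W : ι → Submodule K V}

theorem Submodule.exists_ker_eq_of_isCoatom {H : Submodule K V} (hH : IsCoatom H) :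
    ∃ f : V →ₗ[K] K, LinearMap.ker f = H := by
  obtain ⟨f, hf0, hle⟩ := H.exists_le_ker_of_lt_top hH.lt_top
  exact ⟨f, (hH.le_iff.mp hle).resolve_left (by rwa [LinearMap.ker_eq_top])⟩

namespace DirectSum.IsInternal

def proj (hW : IsInternal W) (i : ι) : V →ₗ[K] V :=
  (W i).subtype ∘ₗ component K ι (fun i => W i) i ∘ₗ
    (LinearEquiv.ofBijective (coeLinearMap W) hW).symm.toLinearMap

theorem proj_apply_mem (hW : IsInternal W) (i : ι) (x : V) : hW.proj i x ∈ W i :=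
  Submodule.coe_mem _

theorem sum_proj_apply [Fintype ι] (hW : IsInternal W) (x : V) : ∑ i, hW.proj i x = x := by
  set e := LinearEquiv.ofBijective (coeLinearMap W) hW
  calc ∑ i, hW.proj i x = coeLinearMap W (e.symm x) := by
        conv_rhs => rw [← sum_univ_of (e.symm x), map_sum]
        simp [coeLinearMap_of, proj, e, ← apply_eq_component]
    _ = x := e.apply_symm_apply x

def scale (hW : IsInternal W) (i : ι) (c : K) : V →ₗ[K] V :=
  LinearMap.id + (c - 1) • hW.proj i

theorem scale_apply (hW : IsInternal W) (i : ι) (c : K) (x : V) :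
    hW.scale i c x = x + (c - 1) • hW.proj i x := rfl

theorem apply_scale [Fintype ι] {U : Type*} [AddCommGroup U] [Module K U] (hW : IsInternal W)
    {f : V →ₗ[K] U} {m : ι} (hf : ∀ j ≠ m, W j ≤ LinearMap.ker f) (i : ι) (c : K) (x : V) :
    f (hW.scale i c x) = if i = m then c • f x else f x := by
  have hproj : f (hW.proj i x) = if i = m then f x else 0 := by
    split_ifs with him
    · subst him
      conv_rhs => rw [← hW.sum_proj_apply x, map_sum]
      exact (Finset.sum_eq_single i (fun j _ hji => hf j hji (hW.proj_apply_mem j x))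
        (by simp)).symm
    · exact hf i him (hW.proj_apply_mem i x)
  rw [scale_apply, map_add, map_smul, hproj]
  split_ifs <;> simp [sub_smul]

end DirectSum.IsInternal

end LinearAlgebra

theorem Subgroup.exists_le_center_mulEquiv_of_not_isOfFinOrder {G ι : Type*} [Group G]
    [Fintype ι] [DecidableEq ι] {A : ι → Type*} [∀ i, CommGroup (A i)] (c : ι → G)
    (hc : ∀ i, c i ∈ center G) (w : ∀ i, G →* A i) (hw : ∀ i j, j ≠ i → w i (c j) = 1)
    (hw' : ∀ i, ¬ IsOfFinOrder (w i (c i))) :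
    ∃ S : Subgroup G, S ≤ center G ∧ Nonempty (S ≃* Multiplicative (ι → ℤ)) := by
  have hcomm : Pairwise fun i j => ∀ x y : Multiplicative ℤ,
      Commute (zpowersHom G (c i) x) (zpowersHom G (c j) y) := fun i j _ x y =>
    mem_center_iff.mp (zpow_mem (hc j) _) _
  set ψ := MonoidHom.noncommPiCoprod (fun i => zpowersHom G (c i)) hcomm
  have hwψ : ∀ i m, w i (ψ m) = w i (c i) ^ (m i).toAdd := by
    intro i m
    change ((w i).comp ψ) m = _
    conv_lhs => rw [← Finset.univ_prod_mulSingle m]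
    rw [map_prod, Finset.prod_eq_single i (fun j _ hji => by simp [ψ, hw i j hji]) (by simp)]
    simp [ψ]
  have hψ : Function.Injective ψ := by
    refine (injective_iff_map_eq_one ψ).mpr fun m hm => funext fun i => ?_
    have h := hwψ i m
    rw [hm, map_one, eq_comm, ← zpow_zero (w i (c i))] at h
    exact injective_zpow_iff_not_isOfFinOrder.mpr (hw' i) h
  refine ⟨ψ.range, ?_, ⟨(MonoidHom.ofInjective hψ).symm.trans
    (MulEquiv.funMultiplicative ι ℤ).symm⟩⟩
  rw [MonoidHom.noncommPiCoprod_range]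
  exact iSup_le fun i => (range_zpowersHom (c i)).trans_le (zpowers_le.mpr (hc i))

theorem FundamentalGroup.fromPath_evalAt_mem_center {X : Type*} [TopologicalSpace X]
    (F : (ContinuousMap.id X).Homotopy (ContinuousMap.id X)) (x : X) :
    FundamentalGroup.fromPath ⟦F.evalAt x⟧ ∈ Subgroup.center (FundamentalGroup X x) := by
  refine Subgroup.mem_center_iff.mpr fun g => ?_
  induction g using Quotient.inductionOn with
  | h α => exact (Quotient.sound (Path.Homotopic.map_trans_evalAt F α)).symm

local notation "ℂ∗" => {z : ℂ // z ≠ 0}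

def circleLoop (c : ℂ∗) : Path c c where
  toFun t := ⟨exp (2 * Real.pi * I * (t : ℝ)) * c, mul_ne_zero (exp_ne_zero _) c.2⟩
  continuous_toFun := by fun_prop
  source' := by ext; simp
  target' := by ext; simp

/-- `2πi` times the winding number around `0`, as the monodromy of the covering `exp : ℂ → ℂ∗`
(whose deck group is `2πiℤ`). -/
def windingHom (c : ℂ∗) :
    FundamentalGroup ℂ∗ c →* (Multiplicative (AddSubgroup.zmultiples (2 * Real.pi * I)))ᵐᵒᵖ :=
  isAddQuotientCoveringMap_exp.fundamentalGroupToMulOpposite ⟨log c, Subtype.ext (exp_log c.2)⟩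

theorem windingHom_circleLoop (c : ℂ∗) :
    windingHom c (FundamentalGroup.fromPath ⟦circleLoop c⟧) =
      MulOpposite.op (Multiplicative.ofAdd ⟨2 * Real.pi * I, AddSubgroup.mem_zmultiples _⟩) := by
  rw [windingHom, IsAddQuotientCoveringMap.fundamentalGroupToMulOpposite_apply_eq_Iff]
  let Γ : C(unitInterval, ℂ) := ⟨fun t => log c + 2 * Real.pi * I * (t : ℝ), by fun_prop⟩
  have hΓ := (isAddQuotientCoveringMap_exp.isCoveringMap.eq_liftPath_iff' (Γ := Γ)
    (γ := (circleLoop c).toContinuousMap) (e := log c) (Subtype.ext (by simp [exp_log c.2]))).mpr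
    ⟨?_, ?_⟩
  · rw [show (isAddQuotientCoveringMap_exp.isCoveringMap.monodromy _ _ : ℂ) = _ from
      congrArg (· 1) hΓ.symm]
    simp [Γ, add_comm]
  · funext t
    ext
    simp [Γ, circleLoop, exp_add, exp_log c.2, mul_comm]
  · simp [Γ]

theorem not_isOfFinOrder_windingHom_circleLoop (c : ℂ∗) :
    ¬ IsOfFinOrder (windingHom c (FundamentalGroup.fromPath ⟦circleLoop c⟧)) := by
  rw [windingHom_circleLoop]
  simp [isOfFinOrder_iff_pow_eq_one, Real.pi_ne_zero]

section Rotation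

variable {V ι : Type*} [NormedAddCommGroup V] [NormedSpace ℂ V] [DecidableEq ι]
  {W : ι → Submodule ℂ V}

def LinearMap.toPunctured [FiniteDimensional ℂ V] {M : Set V} (f : V →ₗ[ℂ] ℂ)
    (hf : ∀ x ∈ M, f x ≠ 0) : C(M, ℂ∗) :=
  ⟨fun x => ⟨f x, hf x x.2⟩, by
    have := f.continuous_of_finiteDimensional
    fun_prop⟩

namespace DirectSum.IsInternal

def rotationHomotopy [FiniteDimensional ℂ V] (hW : IsInternal W) (i : ι) {M : Set V}
    (hM : ∀ c : ℂ, c ≠ 0 → ∀ x ∈ M, hW.scale i c x ∈ M) :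
    (ContinuousMap.id M).Homotopy (ContinuousMap.id M) where
  toFun p := ⟨hW.scale i (exp (2 * Real.pi * I * (p.1 : ℝ))) p.2, hM _ (exp_ne_zero _) _ p.2.2⟩
  continuous_toFun := by
    have := (hW.proj i).continuous_of_finiteDimensional
    simp only [scale_apply]
    fun_prop
  map_zero_left x := by ext; simp [scale_apply]
  map_one_left x := by ext; simp [scale_apply]

theorem map_fromPath_evalAt_rotationHomotopy [FiniteDimensional ℂ V] [Fintype ι]
    (hW : IsInternal W) {M : Set V} {f : V →ₗ[ℂ] ℂ} {i : ι}
    (hf : ∀ j ≠ i, W j ≤ LinearMap.ker f) (hfM : ∀ x ∈ M, f x ≠ 0) (j : ι)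
    (hM : ∀ c : ℂ, c ≠ 0 → ∀ x ∈ M, hW.scale j c x ∈ M) (x : M) :
    FundamentalGroup.map (f.toPunctured hfM) x
        (FundamentalGroup.fromPath ⟦(hW.rotationHomotopy j hM).evalAt x⟧) =
      if j = i then FundamentalGroup.fromPath ⟦circleLoop (f.toPunctured hfM x)⟧ else 1 := by
  have hloop : ((hW.rotationHomotopy j hM).evalAt x).map (f.toPunctured hfM).continuous =
      if j = i then circleLoop (f.toPunctured hfM x) else Path.refl _ := by
    split_ifs with hji <;> ext t
    · change f (hW.scale j _ x) = _ * f x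
      rw [hW.apply_scale hf, if_pos hji, smul_eq_mul]
    · change f (hW.scale j _ x) = f x
      rw [hW.apply_scale hf, if_neg hji]
  change FundamentalGroup.fromPath
    ⟦((hW.rotationHomotopy j hM).evalAt x).map (f.toPunctured hfM).continuous⟧ = _
  rw [hloop]
  split_ifs <;> rfl

end DirectSum.IsInternal

end Rotation

namespace CxArr

variable {V ι : Type} [NormedAddCommGroup V] [NormedSpace ℂ V] {𝒜 : Finset (Submodule ℂ V)}
  {W : ι → Submodule ℂ V}

theorem scale_mem_Mset [Fintype ι] [DecidableEq ι] (hhyp : ∀ H ∈ 𝒜, IsCoatom H)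
    (hW : DirectSum.IsInternal W) (htype : ∀ H ∈ 𝒜, ∃ m, ∀ j, j ≠ m → W j ≤ H) (i : ι) {c : ℂ}
    (hc : c ≠ 0) {x : V} (hx : x ∈ Mset 𝒜) : hW.scale i c x ∈ Mset 𝒜 := by
  intro H hH
  obtain ⟨f, rfl⟩ := Submodule.exists_ker_eq_of_isCoatom (hhyp H hH)
  obtain ⟨m, hm⟩ := htype _ hH
  have hfx : f x ≠ 0 := hx _ hH
  rw [LinearMap.mem_ker, hW.apply_scale hm]
  split_ifs <;> simp [hc, hfx]

theorem exists_linearForm_ne_zero_on_Mset (hhyp : ∀ H ∈ 𝒜, IsCoatom H) (hess : 𝒜.inf id = ⊥)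
    (htype : ∀ H ∈ 𝒜, ∃ m, ∀ j, j ≠ m → W j ≤ H) {i : ι} (hWi : W i ≠ ⊥) :
    ∃ f : V →ₗ[ℂ] ℂ, (∀ j ≠ i, W j ≤ LinearMap.ker f) ∧ ∀ x ∈ Mset 𝒜, f x ≠ 0 := by
  obtain ⟨H, hH, hWH⟩ := Finset.exists_mem_not_le_of_inf_eq_bot hess hWi
  obtain ⟨f, rfl⟩ := Submodule.exists_ker_eq_of_isCoatom (hhyp H hH)
  obtain ⟨m, hm⟩ := htype _ hH
  obtain rfl : m = i := by_contra fun hmi => hWH (hm i (Ne.symm hmi))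
  exact ⟨f, hm, fun x hx => hx _ hH⟩

end CxArr

open CxArr in
/-- If `𝒜` is an essential central hyperplane arrangement in a
finite-dimensional complex vector space whose irreducible decomposition has `k` factors, then
the center of `G = π₁(M(𝒜))` contains a free abelian subgroup of rank `k`. -/
theorem statement_2 {V : Type} [NormedAddCommGroup V] [NormedSpace ℂ V]
    [FiniteDimensional ℂ V] (𝒜 : Finset (Submodule ℂ V))
    (hhyp : ∀ H ∈ 𝒜, IsCoatom H) (hess : 𝒜.inf id = ⊥)
    (k : ℕ) (W : Fin k → Submodule ℂ V) (hdec : IrredDecomp 𝒜 k W)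
    (x₀ : ↥(Mset 𝒜)) :
    ∃ S : Subgroup (FundamentalGroup ↥(Mset 𝒜) x₀),
      S ≤ Subgroup.center (FundamentalGroup ↥(Mset 𝒜) x₀) ∧
      Nonempty (↥S ≃* Multiplicative (Fin k → ℤ)) := by
  obtain ⟨hW, hWne, htype, -⟩ := hdec
  have hM : ∀ i (c : ℂ), c ≠ 0 → ∀ x ∈ Mset 𝒜, hW.scale i c x ∈ Mset 𝒜 :=
    fun i _ hc _ hx => scale_mem_Mset hhyp hW htype i hc hx
  choose f hf hfM using fun i => exists_linearForm_ne_zero_on_Mset hhyp hess htype (hWne i)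
  refine Subgroup.exists_le_center_mulEquiv_of_not_isOfFinOrder
    (fun i => FundamentalGroup.fromPath ⟦(hW.rotationHomotopy i (hM i)).evalAt x₀⟧)
    (fun i => FundamentalGroup.fromPath_evalAt_mem_center _ x₀)
    (fun i => (windingHom _).comp (FundamentalGroup.map ((f i).toPunctured (hfM i)) x₀))
    (fun i j hji => ?_) (fun i => ?_)
  · rw [MonoidHom.comp_apply, hW.map_fromPath_evalAt_rotationHomotopy (hf i), if_neg hji, map_one]
  · rw [MonoidHom.comp_apply, hW.map_fromPath_evalAt_rotationHomotopy (hf i), if_pos rfl]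
    exact not_isOfFinOrder_windingHom_circleLoop _
end
end

section
/- Let 𝒜 be a central hyperplane arrangement in a finite-dimensional complex vector space V and let E∈Q(𝒜). Let i:M(𝒜_{V/E})→M(𝒜) be the embedding obtained by identifying M(𝒜_{V/E}) with the intersection of M(𝒜_{V/E}) with a sufficiently small disk D about E/E in V/E, regarded as a normal disk to E at a point of E∩M(𝒜^E), and let r:M(𝒜)→M(𝒜_{V/E}) be the composition of the inclusion M(𝒜)↪M(𝒜_E)≅E×M(𝒜_{V/E}) with the projection to M(𝒜_{V/E}), where 𝒜_E={H∈𝒜 : E⊆H}. Then the composition r∘i is homotopic to the identity map of M(𝒜_{V/E}); in particular, i induces an injective homomorphism on fundamental groups. -/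
open CategoryTheory
open scoped FundamentalGroupoid Classical

noncomputable section

namespace CxArr

attribute [local instance] Path.Homotopic.setoid

variable {V : Type} [NormedAddCommGroup V] [NormedSpace ℂ V] [FiniteDimensional ℂ V]

end CxArr

/-! The point `p ∈ E` is killed by the projection along `E`, so `r ∘ i` is the radial rescaling
`w ↦ (ε / (1 + ‖w‖)) • w`. The complement of the central arrangement `𝒜_{V/E}` is a cone, so
interpolating the scaling factor linearly to `1` is a homotopy to the identity inside it. A map
with a left homotopy inverse induces a faithful functor on fundamental groupoids, hence is
injective on fundamental groups. -/

theorem FundamentalGroupoid.faithful_map_of_homotopic_id {X : Type} [TopologicalSpace X]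
    {h : C(X, X)} (hh : h.Homotopic (ContinuousMap.id X)) :
    (FundamentalGroupoid.map h).Faithful := by
  obtain ⟨H⟩ := hh
  let e : FundamentalGroupoid.map h ≅ 𝟭 _ :=
    asIso (FundamentalGroupoidFunctor.homotopicMapsNatIso H) ≪≫
      eqToIso FundamentalGroupoid.map_id
  exact Functor.Faithful.of_iso e.symm

namespace CxArr

variable {X Y : Type} [TopologicalSpace X] [TopologicalSpace Y]

theorem indFunctor_eq_map (f : C(X, Y)) : indFunctor f = FundamentalGroupoid.map f := rfl

theorem indHom_injective_of_comp_homotopic_id {f : C(X, Y)} {g : C(Y, X)}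
    (hgf : (g.comp f).Homotopic (ContinuousMap.id X)) (x : X) :
    Function.Injective (indHom f x) := by
  have : (indFunctor f ⋙ FundamentalGroupoid.map g).Faithful := by
    rw [indFunctor_eq_map, ← FundamentalGroupoid.map_comp]
    exact FundamentalGroupoid.faithful_map_of_homotopic_id hgf
  have : (indFunctor f).Faithful := Functor.Faithful.of_comp _ (FundamentalGroupoid.map g)
  exact (indFunctor f).map_injective

end CxArr

section RadialRescale

variable {F : Type*} [TopologicalSpace F] [MulAction ℝ F] [ContinuousSMul ℝ F]
  {S : Set F} (hS : ∀ a : ℝ, 0 < a → ∀ x ∈ S, a • x ∈ S) (c : C(S, ℝ)) (hc : ∀ x, 0 < c x)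

def radialRescale : C(S, S) where
  toFun x := ⟨c x • (x : F), hS _ (hc x) x x.2⟩
  continuous_toFun := (c.continuous.smul continuous_subtype_val).subtype_mk _

theorem radialRescale_homotopic_id : (radialRescale hS c hc).Homotopic (ContinuousMap.id S) := by
  have hpos (t : unitInterval) (x : S) : 0 < (1 - (t : ℝ)) * c x + t := by
    rcases t.2.1.eq_or_lt with ht | ht
    · simpa [← ht] using hc x
    · exact add_pos_of_nonneg_of_pos (mul_nonneg (sub_nonneg.2 t.2.2) (hc x).le) ht
  refine ⟨{ toFun := fun q ↦ ⟨((1 - (q.1 : ℝ)) * c q.2 + q.1) • (q.2 : F),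
              hS _ (hpos q.1 q.2) _ q.2.2⟩
            continuous_toFun := ?_
            map_zero_left := fun _ ↦ by simp [radialRescale]
            map_one_left := fun _ ↦ by simp }⟩
  fun_prop

end RadialRescale

namespace CxArr

variable {V : Type} [NormedAddCommGroup V] [NormedSpace ℂ V]
  {𝒜 : Finset (Submodule ℂ V)} {E W : Submodule ℂ V}

theorem smul_mem_MW {a : ℝ} (ha : a ≠ 0) {w : W} (hw : w ∈ MW 𝒜 E W) : a • w ∈ MW 𝒜 E W := by
  intro H hH hEH hmem
  have hwH := H.smul_of_tower_mem a⁻¹ hmem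
  rw [Submodule.coe_smul_of_tower, inv_smul_smul₀ ha] at hwH
  exact hw H hH hEH hwH

theorem projection_comp_eq_radialRescale (hW : IsCompl E W) {p : V} (hpE : p ∈ E)
    (c : C(MW 𝒜 E W, ℝ)) (hc : ∀ w, 0 < c w) {i : C(MW 𝒜 E W, Mset 𝒜)}
    (hi : ∀ w, (i w : V) = p + c w • ((w : W) : V)) {r : C(Mset 𝒜, MW 𝒜 E W)}
    (hr : ∀ x, (r x : W) = Submodule.projectionOnto W E hW.symm (x : V)) :
    r.comp i = radialRescale (fun _ ha _ hw ↦ smul_mem_MW ha.ne' hw) c hc := by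
  ext w
  simp [radialRescale, hr, hi, Submodule.projectionOnto_apply_of_mem_right hW.symm hpE]

end CxArr

open CxArr in
theorem statement_4_general {V : Type} [NormedAddCommGroup V] [NormedSpace ℂ V]
    (𝒜 : Finset (Submodule ℂ V))
    (E : Submodule ℂ V)
    (W : Submodule ℂ V) (hW : IsCompl E W)
    (p : V) (hpE : p ∈ E)
    (ε : ℝ) (hε : 0 < ε)
    (i : C(↥(MW 𝒜 E W), ↥(Mset 𝒜)))
    (hi : ∀ w : ↥(MW 𝒜 E W),
      ((i w : V)) = p + (ε / (1 + ‖((w : ↥W) : V)‖)) • ((w : ↥W) : V))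
    (r : C(↥(Mset 𝒜), ↥(MW 𝒜 E W)))
    (hr : ∀ x : ↥(Mset 𝒜),
      ((r x : ↥W)) = Submodule.linearProjOfIsCompl W E hW.symm (x : V)) :
    (r.comp i).Homotopic (ContinuousMap.id ↥(MW 𝒜 E W)) ∧
    ∀ w₀ : ↥(MW 𝒜 E W), Function.Injective (indHom i w₀) := by
  let c : C(MW 𝒜 E W, ℝ) :=
    ⟨fun w ↦ ε / (1 + ‖((w : W) : V)‖),
      continuous_const.div (by fun_prop) (fun _ ↦ by positivity)⟩
  have hc : ∀ w, 0 < c w := fun _ ↦ div_pos hε (by positivity)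
  have hri : (r.comp i).Homotopic (ContinuousMap.id _) := by
    rw [projection_comp_eq_radialRescale hW hpE c hc hi hr]
    exact radialRescale_homotopic_id _ c hc
  exact ⟨hri, indHom_injective_of_comp_homotopic_id hri⟩

open CxArr in
/-- For a central arrangement `𝒜` and `E ∈ Q(𝒜)`, the composition `r ∘ i`
of the normal-disk embedding `i : M(𝒜_{V/E}) → M(𝒜)` with the retraction
`r : M(𝒜) → M(𝒜_{V/E})` is homotopic to the identity; in particular `i` is `π₁`-injective.
(Here `V/E` is realized as a linear complement `W` of `E`, `i` is given by
`w ↦ p + (ε/(1+‖w‖))•w` for a point `p ∈ E ∩ M(𝒜^E)` — i.e. the image of the small normal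
disk `D` about `E/E` — and `r` is induced by the linear projection of `V` onto `W` along `E`,
i.e. by the composition `M(𝒜) ↪ M(𝒜_E) ≅ E × M(𝒜_{V/E}) → M(𝒜_{V/E})`.) -/
theorem statement_4 {V : Type} [NormedAddCommGroup V] [NormedSpace ℂ V]
    [FiniteDimensional ℂ V] (𝒜 : Finset (Submodule ℂ V))
    (hhyp : ∀ H ∈ 𝒜, IsCoatom H)
    (E : Submodule ℂ V) (hE : QMem 𝒜 E)
    (W : Submodule ℂ V) (hW : IsCompl E W)
    (p : V) (hpE : p ∈ E) (hpM : ∀ H ∈ 𝒜, ¬ E ≤ H → p ∉ H)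
    (ε : ℝ) (hε : 0 < ε)
    (i : C(↥(MW 𝒜 E W), ↥(Mset 𝒜)))
    (hi : ∀ w : ↥(MW 𝒜 E W),
      ((i w : V)) = p + (ε / (1 + ‖((w : ↥W) : V)‖)) • ((w : ↥W) : V))
    (r : C(↥(Mset 𝒜), ↥(MW 𝒜 E W)))
    (hr : ∀ x : ↥(Mset 𝒜),
      ((r x : ↥W)) = Submodule.linearProjOfIsCompl W E hW.symm (x : V)) :
    (r.comp i).Homotopic (ContinuousMap.id ↥(MW 𝒜 E W)) ∧
    ∀ w₀ : ↥(MW 𝒜 E W), Function.Injective (indHom i w₀) :=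
  statement_4_general 𝒜 E W hW p hpE ε hε i hi r hr
end
end

section
/- Let 𝒜 be a finite, central, essential, simplicial real arrangement. Let F and F′ be adjacent parallel faces of Z(𝒜) dual to B, both contained in a face F₀ with dim F₀ = dim F + 1, and let p:F→F′ be parallel translation. Then: (1) for any vertex x∈F, with y = Ant(x,F₀) (which lies in F′), the morphism Δ_x(F₀)(Δ^y(F′))⁻¹ is an elementary B-segment, and every elementary B-segment from F to F′ is of this form for some vertex x∈F; (2) if u is an elementary B-segment with x=s(u)∈F and x′=t(u)∈F′, then (Δ_x(F))^k u = u (Δ_{x′}(F′))^k for every positive even integer k; (3) a positive path representing an elementary B-segment crosses no hyperplane dual to an edge of F. -/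
open scoped Classical

noncomputable section

namespace DelGrpd

variable {A : Type} [NormedAddCommGroup A] [InnerProductSpace ℝ A] [FiniteDimensional ℝ A]

/-- A finite, central, essential arrangement of linear hyperplanes in the real vector
space `A`. -/
structure RealArr (A : Type) [NormedAddCommGroup A] [InnerProductSpace ℝ A]
    [FiniteDimensional ℝ A] where
  hyps : Finset (Submodule ℝ A)
  coatoms : ∀ H ∈ hyps, IsCoatom H
  essential : hyps.inf id = ⊥

/-- The complement of the arrangement. -/
def cmpl (𝒜 : RealArr A) : Set A := {x | ∀ H ∈ 𝒜.hyps, x ∉ H}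

/-- A chamber: a connected component of the complement. -/
def IsChamber (𝒜 : RealArr A) (C : Set A) : Prop :=
  ∃ x ∈ cmpl 𝒜, C = connectedComponentIn (cmpl 𝒜) x

/-- The type of chambers of `𝒜`. -/
def Chamber (𝒜 : RealArr A) : Type := {C : Set A // IsChamber 𝒜 C}

/-- The arrangement is simplicial: every chamber is an open simplicial cone. -/
def Simplicial (𝒜 : RealArr A) : Prop :=
  ∀ C : Set A, IsChamber 𝒜 C →
    ∃ f : Fin (Module.finrank ℝ A) → (A →ₗ[ℝ] ℝ),
      LinearIndependent ℝ f ∧ C = {x | ∀ i, 0 < f i x}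

/-- The arrangement is irreducible (not a nontrivial direct sum). -/
def Irred (𝒜 : RealArr A) : Prop :=
  ¬ ∃ V₁ V₂ : Submodule ℝ A, IsCompl V₁ V₂ ∧ V₁ ≠ ⊥ ∧ V₂ ≠ ⊥ ∧
    ∀ H ∈ 𝒜.hyps, V₁ ≤ H ∨ V₂ ≤ H

/-- The hyperplane `H` separates the sets `C` and `D`. -/
def Separates (H : Submodule ℝ A) (C D : Set A) : Prop :=
  ∃ f : A →ₗ[ℝ] ℝ, LinearMap.ker f = H ∧ (∀ x ∈ C, 0 < f x) ∧ (∀ x ∈ D, f x < 0)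

/-- Two chambers are adjacent when exactly one hyperplane of `𝒜` separates them. -/
def Adj (𝒜 : RealArr A) (C D : Chamber 𝒜) : Prop :=
  ∃! H : Submodule ℝ A, H ∈ 𝒜.hyps ∧ Separates H C.1 D.1

/-- A step of an edge path in the graph `Γ(𝒜)`: an arrow of `Γ(𝒜)` traversed either
positively or negatively (formal inverse). -/
inductive Step (𝒜 : RealArr A) : Chamber 𝒜 → Chamber 𝒜 → Type
  | pos {x y : Chamber 𝒜} (h : Adj 𝒜 x y) : Step 𝒜 x y
  | neg {x y : Chamber 𝒜} (h : Adj 𝒜 y x) : Step 𝒜 x y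

/-- The sign of a step. -/
def Step.sign {𝒜 : RealArr A} {x y : Chamber 𝒜} : Step 𝒜 x y → ℤ
  | .pos _ => 1
  | .neg _ => -1

/-- Reversal of a step. -/
def Step.symm {𝒜 : RealArr A} {x y : Chamber 𝒜} : Step 𝒜 x y → Step 𝒜 y x
  | .pos h => .neg h
  | .neg h => .pos h

/-- Edge paths in `Γ(𝒜)` (words in the arrows and their formal inverses). -/
inductive Path (𝒜 : RealArr A) : Chamber 𝒜 → Chamber 𝒜 → Type
  | nil (x : Chamber 𝒜) : Path 𝒜 x x
  | cons {x y z : Chamber 𝒜} (s : Step 𝒜 x y) (p : Path 𝒜 y z) : Path 𝒜 x z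

namespace Path

variable {𝒜 : RealArr A}

/-- Concatenation of paths. -/
def comp : {x y z : Chamber 𝒜} → Path 𝒜 x y → Path 𝒜 y z → Path 𝒜 x z
  | _, _, _, .nil _, q => q
  | _, _, _, .cons s p, q => .cons s (comp p q)

/-- The inverse path. -/
def inv : {x y : Chamber 𝒜} → Path 𝒜 x y → Path 𝒜 y x
  | _, _, .nil x => .nil x
  | _, _, .cons s p => comp (inv p) (.cons s.symm (.nil _))

/-- The length of a path. -/
def length : {x y : Chamber 𝒜} → Path 𝒜 x y → ℕ
  | _, _, .nil _ => 0
  | _, _, .cons _ p => length p + 1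

/-- A path is positive when all of its steps are positive. -/
def Positive : {x y : Chamber 𝒜} → Path 𝒜 x y → Prop
  | _, _, .nil _ => True
  | _, _, .cons (.pos _) p => Positive p
  | _, _, .cons (.neg _) _ => False

/-- A path is minimal when no path with the same endpoints is shorter. -/
def Minimal {x y : Chamber 𝒜} (p : Path 𝒜 x y) : Prop :=
  ∀ q : Path 𝒜 x y, p.length ≤ q.length

@[simp] theorem nil_comp {x y : Chamber 𝒜} (p : Path 𝒜 x y) : comp (.nil x) p = p := rfl

@[simp] theorem comp_nil {x y : Chamber 𝒜} (p : Path 𝒜 x y) : comp p (.nil y) = p := by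
  induction p with
  | nil _ => rfl
  | cons s p ih => simp [comp, ih]

theorem comp_assoc {w x y z : Chamber 𝒜} (p : Path 𝒜 w x) (q : Path 𝒜 x y) (r : Path 𝒜 y z) :
    comp (comp p q) r = comp p (comp q r) := by
  induction p with
  | nil _ => rfl
  | cons s p ih => simp [comp, ih]

@[simp] theorem step_symm_symm {x y : Chamber 𝒜} (s : Step 𝒜 x y) : s.symm.symm = s := by
  cases s <;> rfl

theorem inv_comp {x y z : Chamber 𝒜} (p : Path 𝒜 x y) (q : Path 𝒜 y z) :
    inv (comp p q) = comp (inv q) (inv p) := by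
  induction p with
  | nil _ => simp [inv]
  | cons s p ih => simp [comp, inv, ih, comp_assoc]

@[simp] theorem inv_inv {x y : Chamber 𝒜} (p : Path 𝒜 x y) : inv (inv p) = p := by
  induction p with
  | nil _ => rfl
  | cons s p ih =>
      show inv (comp (inv p) (.cons s.symm (.nil _))) = _
      rw [inv_comp, ih]
      simp [inv, comp]

end Path

/-- Equivalence of edge paths: the smallest equivalence relation such that (a) `p ⬝ p⁻¹` is
equivalent to the constant path, (b) it is closed under inversion, (c) it is preserved by
pre- and post-concatenation, and (d) any two minimal positive paths with the same endpoints
are equivalent. -/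
inductive Rel (𝒜 : RealArr A) : {x y : Chamber 𝒜} → Path 𝒜 x y → Path 𝒜 x y → Prop
  | refl {x y : Chamber 𝒜} (p : Path 𝒜 x y) : Rel 𝒜 p p
  | symm {x y : Chamber 𝒜} {p q : Path 𝒜 x y} : Rel 𝒜 p q → Rel 𝒜 q p
  | trans {x y : Chamber 𝒜} {p q r : Path 𝒜 x y} : Rel 𝒜 p q → Rel 𝒜 q r → Rel 𝒜 p r
  | cancel {x y : Chamber 𝒜} (p : Path 𝒜 x y) : Rel 𝒜 (p.comp p.inv) (Path.nil x)
  | inv {x y : Chamber 𝒜} {p q : Path 𝒜 x y} : Rel 𝒜 p q → Rel 𝒜 p.inv q.inv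
  | congr_left {w x y : Chamber 𝒜} (h : Path 𝒜 w x) {p q : Path 𝒜 x y} :
      Rel 𝒜 p q → Rel 𝒜 (h.comp p) (h.comp q)
  | congr_right {x y z : Chamber 𝒜} (h : Path 𝒜 y z) {p q : Path 𝒜 x y} :
      Rel 𝒜 p q → Rel 𝒜 (p.comp h) (q.comp h)
  | minpos {x y : Chamber 𝒜} (p q : Path 𝒜 x y) :
      p.Positive → q.Positive → p.Minimal → q.Minimal → Rel 𝒜 p q

instance pathSetoid (𝒜 : RealArr A) (x y : Chamber 𝒜) : Setoid (Path 𝒜 x y) :=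
  ⟨Rel 𝒜, ⟨Rel.refl, Rel.symm, Rel.trans⟩⟩

/-- Morphisms of the Deligne groupoid `G(𝒜)`: equivalence classes of edge paths. -/
def Mor (𝒜 : RealArr A) (x y : Chamber 𝒜) : Type := Quotient (pathSetoid 𝒜 x y)

namespace Mor

variable {𝒜 : RealArr A}

/-- Composition of morphisms of the Deligne groupoid. -/
def comp {x y z : Chamber 𝒜} : Mor 𝒜 x y → Mor 𝒜 y z → Mor 𝒜 x z :=
  Quotient.lift₂ (fun p q => (⟦p.comp q⟧ : Mor 𝒜 x z))
    (fun _ _ _ _ hp hq =>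
      Quotient.sound ((Rel.congr_right _ hp).trans (Rel.congr_left _ hq)))

/-- Inversion of morphisms of the Deligne groupoid. -/
def symm {x y : Chamber 𝒜} : Mor 𝒜 x y → Mor 𝒜 y x :=
  Quotient.map Path.inv (fun _ _ h => Rel.inv h)

@[simp] theorem comp_mk {x y z : Chamber 𝒜} (p : Path 𝒜 x y) (q : Path 𝒜 y z) :
    comp (⟦p⟧ : Mor 𝒜 x y) ⟦q⟧ = ⟦p.comp q⟧ := rfl

/-- A positive morphism: one represented by a positive path. -/
def Pos {x y : Chamber 𝒜} (φ : Mor 𝒜 x y) : Prop :=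
  ∃ p : Path 𝒜 x y, p.Positive ∧ φ = ⟦p⟧

/-- The identity morphisms (possibly after identification of the endpoints): morphisms
represented by a path of length zero. -/
def IsId {x y : Chamber 𝒜} (φ : Mor 𝒜 x y) : Prop :=
  ∃ p : Path 𝒜 x y, p.length = 0 ∧ φ = ⟦p⟧

end Mor

/-- The isotropy group of the Deligne groupoid at the chamber `x`. -/
instance morGroup (𝒜 : RealArr A) (x : Chamber 𝒜) : Group (Mor 𝒜 x x) where
  mul := Mor.comp
  one := (⟦Path.nil x⟧ : Mor 𝒜 x x)
  inv := Mor.symm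
  mul_assoc a b c := by
    refine Quotient.inductionOn₃ a b c fun p q r => ?_
    show (⟦(p.comp q).comp r⟧ : Mor 𝒜 x x) = ⟦p.comp (q.comp r)⟧
    rw [Path.comp_assoc]
  one_mul a := by
    refine Quotient.inductionOn a fun p => ?_
    show (⟦(Path.nil x).comp p⟧ : Mor 𝒜 x x) = ⟦p⟧
    rw [Path.nil_comp]
  mul_one a := by
    refine Quotient.inductionOn a fun p => ?_
    show (⟦p.comp (Path.nil x)⟧ : Mor 𝒜 x x) = ⟦p⟧
    rw [Path.comp_nil]
  inv_mul_cancel a := by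
    refine Quotient.inductionOn a fun p => ?_
    show (⟦p.inv.comp p⟧ : Mor 𝒜 x x) = ⟦Path.nil x⟧
    have h := Rel.cancel (𝒜 := 𝒜) p.inv
    rw [Path.inv_inv] at h
    exact Quotient.sound h

/-- The prefix order on morphisms: `f ≼ g` iff `g = f ⬝ h` for a positive `h`. -/
def prefixLe {𝒜 : RealArr A} {x y z : Chamber 𝒜} (f : Mor 𝒜 x y) (g : Mor 𝒜 x z) : Prop :=
  ∃ h : Mor 𝒜 y z, h.Pos ∧ g = f.comp h

/-- The suffix order on morphisms: `f` is a suffix of `g` iff `g = h ⬝ f` for a positive `h`. -/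
def suffixLe {𝒜 : RealArr A} {x y z : Chamber 𝒜} (f : Mor 𝒜 y z) (g : Mor 𝒜 x z) : Prop :=
  ∃ h : Mor 𝒜 x y, h.Pos ∧ g = h.comp f

end DelGrpd

namespace DelGrpd

variable {A : Type} [NormedAddCommGroup A] [InnerProductSpace ℝ A] [FiniteDimensional ℝ A]

/-- A face of the dual zonotope `Z(𝒜)`, encoded by the corresponding cone of the fan of `𝒜`:
the face is dual to the subspace `B ∈ Q̂(𝒜)` and corresponds to the connected component `c`
of `B` minus the hyperplanes not containing `B`. -/
structure Face (𝒜 : RealArr A) where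
  B : Submodule ℝ A
  c : Set A
  hB : ∃ S : Finset (Submodule ℝ A), S ⊆ 𝒜.hyps ∧ B = S.inf id
  hc : ∃ x : A, x ∈ B ∧ (∀ H ∈ 𝒜.hyps, ¬ B ≤ H → x ∉ H) ∧
    c = connectedComponentIn {y : A | y ∈ B ∧ ∀ H ∈ 𝒜.hyps, ¬ B ≤ H → y ∉ H} x

variable {𝒜 : RealArr A}

/-- The chamber `v` is a vertex of the face `F`. -/
def Face.vert (F : Face 𝒜) (v : Chamber 𝒜) : Prop := F.c ⊆ closure v.1

section Paths

variable {𝒜 : RealArr A}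

/-- All chambers visited by the path are vertices of the face `F` (see `Face.vert`);
i.e. the image of the path under `π` is contained in `F`. -/
def Path.InFace (F : Face 𝒜) : {x y : Chamber 𝒜} → Path 𝒜 x y → Prop
  | x, _, .nil _ => F.vert x
  | x, _, .cons _ p => F.vert x ∧ Path.InFace F p

/-- The path crosses the hyperplane `H` (some step of it is dual to `H`). -/
def Path.Crosses (H : Submodule ℝ A) : {x y : Chamber 𝒜} → Path 𝒜 x y → Prop
  | _, _, .nil _ => False
  | _, _, @Path.cons _ _ _ _ _ x y _ _ p => Separates H x.1 y.1 ∨ Path.Crosses H p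

/-- The signed intersection number of a path with the hyperplane `H`: the sum of the signs
of the steps dual to `H`. -/
def Path.icount (H : Submodule ℝ A) : {x y : Chamber 𝒜} → Path 𝒜 x y → ℤ
  | _, _, .nil _ => 0
  | _, _, @Path.cons _ _ _ _ _ x y _ s p =>
      (if Separates H x.1 y.1 then s.sign else 0) + Path.icount H p

end Paths

/-- Containment of faces of the zonotope (every vertex of `F` is a vertex of `F'`). -/
def Face.le (F F' : Face 𝒜) : Prop := ∀ v : Chamber 𝒜, F.vert v → F'.vert v

/-- A proper face of `Z(𝒜)`: neither a vertex nor the whole zonotope. -/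
def Face.Proper (F : Face 𝒜) : Prop := F.B ≠ ⊤ ∧ F.B ≠ ⊥

/-- The face `F` is irreducible, i.e. the normal arrangement `𝒜_{A/B}` of its dual subspace
`B` does not decompose as a nontrivial direct sum. -/
def Face.Irr (F : Face 𝒜) : Prop :=
  ¬ ∃ W₁ W₂ : Submodule ℝ A, F.B ≤ W₁ ∧ F.B ≤ W₂ ∧ W₁ ⊓ W₂ = F.B ∧ W₁ ⊔ W₂ = ⊤ ∧
    W₁ ≠ F.B ∧ W₂ ≠ F.B ∧ ∀ H ∈ 𝒜.hyps, F.B ≤ H → (W₁ ≤ H ∨ W₂ ≤ H)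

/-- `H` is dual to an edge of the face `F`. -/
def DualEdge (F : Face 𝒜) (H : Submodule ℝ A) : Prop :=
  H ∈ 𝒜.hyps ∧ ∃ v w : Chamber 𝒜, F.vert v ∧ F.vert w ∧ Adj 𝒜 v w ∧ Separates H v.1 w.1

/-- `y = Ant(x, F)`, the antipodal vertex of `x` in the face `F`: the vertex of `F`
separated from `x` by exactly the hyperplanes dual to the edges of `F` (equivalently, by
exactly the hyperplanes containing the dual subspace `B` of `F`). -/
def IsAnt (F : Face 𝒜) (x y : Chamber 𝒜) : Prop :=
  F.vert x ∧ F.vert y ∧ ∀ H ∈ 𝒜.hyps, (F.B ≤ H ↔ Separates H x.1 y.1)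

/-- `v = proj_F x`, the vertex of `F` of minimal distance to `x` in the `1`-skeleton of
`Z(𝒜)`. -/
def IsProj (F : Face 𝒜) (x v : Chamber 𝒜) : Prop :=
  F.vert v ∧ ∀ w : Chamber 𝒜, F.vert w → ∀ q : Path 𝒜 x w,
    ∃ p : Path 𝒜 x v, p.length ≤ q.length

/-- `φ = Δ_x(F)` (equivalently `Δ^{Ant(x,F)}(F)`): the Garside morphism of the face `F`,
represented by a minimal positive path from `x` to `Ant(x, F)` inside `F`. -/
def IsGarside (F : Face 𝒜) {x y : Chamber 𝒜} (φ : Mor 𝒜 x y) : Prop :=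
  IsAnt F x y ∧ ∃ p : Path 𝒜 x y, p.Positive ∧ p.Minimal ∧ p.InFace F ∧ φ = ⟦p⟧

/-- `x' = p(x)` where `p : F → F'` is the parallel translation between the parallel faces
`F` and `F'`: `x'` is the vertex of `F'` not separated from `x` by any hyperplane
containing the common dual subspace `B`. -/
def ParTrans (F F' : Face 𝒜) (x x' : Chamber 𝒜) : Prop :=
  F.B = F'.B ∧ F.vert x ∧ F'.vert x' ∧
    ∀ H ∈ 𝒜.hyps, F.B ≤ H → ¬ Separates H x.1 x'.1

/-- The parallel faces `F` and `F'` are adjacent: they are distinct, dual to the same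
subspace, and contained in a common face of one higher dimension. -/
def AdjFaces (F F' : Face 𝒜) : Prop :=
  F ≠ F' ∧ F.B = F'.B ∧ ∃ F₀ : Face 𝒜, F.le F₀ ∧ F'.le F₀ ∧
    Module.finrank ℝ F.B = Module.finrank ℝ F₀.B + 1

/-- `φ` is an `(F, F')`-elementary `B`-segment: `F` and `F'` are adjacent parallel faces
dual to `B` and `φ` is represented by a minimal positive path from a vertex `x ∈ F` to the
parallel translate `p(x) ∈ F'`. -/
def IsElemSeg (F F' : Face 𝒜) {x x' : Chamber 𝒜} (φ : Mor 𝒜 x x') : Prop :=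
  AdjFaces F F' ∧ ParTrans F F' x x' ∧
    ∃ p : Path 𝒜 x x', p.Positive ∧ p.Minimal ∧ φ = ⟦p⟧

/-- `φ` is an elementary `Bs`-segment (for some pair of adjacent parallel faces dual
to `Bs`). -/
def IsElemSegB (Bs : Submodule ℝ A) {x x' : Chamber 𝒜} (φ : Mor 𝒜 x x') : Prop :=
  ∃ F F' : Face 𝒜, F.B = Bs ∧ IsElemSeg F F' φ

/-- `φ` is a (possibly empty) concatenation of elementary `Bs`-segments. -/
inductive IsElemComp (𝒜 : RealArr A) (Bs : Submodule ℝ A) :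
    {x y : Chamber 𝒜} → Mor 𝒜 x y → Prop
  | nil (x : Chamber 𝒜) : IsElemComp 𝒜 Bs (⟦Path.nil x⟧ : Mor 𝒜 x x)
  | single {x y : Chamber 𝒜} (φ : Mor 𝒜 x y) : IsElemSegB Bs φ → IsElemComp 𝒜 Bs φ
  | comp {x y z : Chamber 𝒜} (φ : Mor 𝒜 x y) (ψ : Mor 𝒜 y z) :
      IsElemComp 𝒜 Bs φ → IsElemComp 𝒜 Bs ψ → IsElemComp 𝒜 Bs (φ.comp ψ)

/-- `z = 𝒵_F`, the standard Dehn twist of the face `F` with respect to the base chamber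
`x₀`: `z = h_F (Δ_{x_F}(F))² h_F⁻¹`, where `x_F = proj_F x₀` and `h_F` is (the class of) a
minimal positive path from `x₀` to `x_F`. -/
def IsDehnTwist (x₀ : Chamber 𝒜) (F : Face 𝒜) (z : Mor 𝒜 x₀ x₀) : Prop :=
  ∃ (v y : Chamber 𝒜) (h : Mor 𝒜 x₀ v) (δ : Mor 𝒜 v y) (δ' : Mor 𝒜 y v),
    IsProj F x₀ v ∧
    (∃ p : Path 𝒜 x₀ v, p.Positive ∧ p.Minimal ∧ h = ⟦p⟧) ∧
    IsGarside F δ ∧ IsGarside F δ' ∧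
    z = h.comp (δ.comp (δ'.comp h.symm))

/-- `Z` is a standard `ℤ`-subgroup of the isotropy group `G_{x₀}` of the Deligne groupoid:
a conjugate of the cyclic subgroup generated by the standard Dehn twist of a proper
irreducible face. -/
def IsStdZSubgroup (x₀ : Chamber 𝒜) (Z : Subgroup (Mor 𝒜 x₀ x₀)) : Prop :=
  ∃ (F : Face 𝒜) (z g : Mor 𝒜 x₀ x₀), F.Proper ∧ F.Irr ∧ IsDehnTwist x₀ F z ∧
    Z = Subgroup.zpowers (g * z * g⁻¹)

/-- The geometric realization of an abstract simplicial complex `K` on the vertex set `α`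
(the faces are the nonempty finite sets belonging to `K`). -/
def realization {α : Type*} (K : Set (Finset α)) : Type _ :=
  {f : α → ℝ // (∀ a, 0 ≤ f a) ∧ (∃ s ∈ K, ∀ a, f a ≠ 0 → a ∈ s) ∧ ∑ᶠ a, f a = 1}

instance {α : Type*} (K : Set (Finset α)) : TopologicalSpace (realization K) :=
  instTopologicalSpaceSubtype

end DelGrpd

/-!
Everything is read off sign vectors. A chamber is determined by its side of each hyperplane, and
the vertices of a face `F` are the chambers lying on the side of `F` of every hyperplane not
containing `F.B`. For adjacent parallel faces `F`, `F'` in `F₀`, a hyperplane not containing `B`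
separates `F` from `F'` exactly when it contains `F₀.B`: the restrictions to `B` of all such
hyperplanes have the same kernel `F₀.B`, so they flip together, and one of them flips since
`F ≠ F'`.

In a simplicial arrangement every chamber has a wall separating it from any other chamber, so
there are positive galleries crossing each separating hyperplane once; a path is minimal iff its
length is the number of separating hyperplanes, and the composite of two minimal positive paths is
minimal when their separating sets are disjoint. Garside paths of `F` cross only hyperplanes
containing `B`, elementary segments only hyperplanes not containing it; this disjointness gives
the factorisation `Δ_x(F₀) = u Δ^y(F')` of (1) and the commuting squares
`Δ_x(F) v = u Δ_{x'}(F')` behind (2). For (3), the signed number of crossings of a hyperplane is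
invariant under path equivalence, and it vanishes on a minimal positive path for the hyperplanes
not separating its ends.
-/

open Topology

namespace DelGrpd

section LinearForms

variable {V : Type*} [AddCommGroup V] [Module ℝ V]

theorem exists_eq_smul_of_ker_le {f g : V →ₗ[ℝ] ℝ} (h : LinearMap.ker f ≤ LinearMap.ker g) :
    ∃ c : ℝ, g = c • f := by
  have := mem_span_of_iInf_ker_le_ker (L := fun _ : Unit => f) (K := g) (by simpa using h)
  rw [Set.range_const, Submodule.mem_span_singleton] at this
  obtain ⟨c, hc⟩ := this
  exact ⟨c, hc.symm⟩

theorem pos_mul_iff_of_ker_eq {f g : V →ₗ[ℝ] ℝ} (h : LinearMap.ker f = LinearMap.ker g)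
    (a b : V) : 0 < f a * f b ↔ 0 < g a * g b := by
  obtain ⟨c, rfl⟩ := exists_eq_smul_of_ker_le h.le
  rcases eq_or_ne c 0 with rfl | hc
  · rw [zero_smul, LinearMap.ker_zero, LinearMap.ker_eq_top] at h
    simp [h]
  · have hc2 : 0 < c * c := mul_self_pos.2 hc
    simp only [LinearMap.smul_apply, smul_eq_mul]
    constructor <;> intro h' <;> nlinarith

theorem exists_ker_eq_of_isCoatom {H : Submodule ℝ V} (hH : IsCoatom H) :
    ∃ f : V →ₗ[ℝ] ℝ, LinearMap.ker f = H := by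
  obtain ⟨f, hf, hHf⟩ := H.exists_dual_map_eq_bot_of_lt_top hH.lt_top inferInstance
  refine ⟨f, (hH.le_iff.1 (LinearMap.le_ker_iff_map.2 hHf)).resolve_left ?_⟩
  rwa [LinearMap.ker_eq_top]

/-- A linear form cutting out `H` (junk value `0` if `H` is not a hyperplane). -/
def hypForm (H : Submodule ℝ V) : V →ₗ[ℝ] ℝ :=
  if h : ∃ f : V →ₗ[ℝ] ℝ, LinearMap.ker f = H then h.choose else 0

theorem ker_hypForm {H : Submodule ℝ V} (hH : IsCoatom H) : LinearMap.ker (hypForm H) = H := by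
  have h := exists_ker_eq_of_isCoatom hH
  rw [hypForm, dif_pos h]
  exact h.choose_spec

theorem hypForm_eq_zero_iff {H : Submodule ℝ V} (hH : IsCoatom H) {a : V} :
    hypForm H a = 0 ↔ a ∈ H := by
  rw [← LinearMap.mem_ker, ker_hypForm hH]

theorem pos_mul_of_mem_segment (g : V →ₗ[ℝ] ℝ) {y z w : V} (h : 0 < g y * g z)
    (hw : w ∈ segment ℝ y z) : 0 < g w * g y := by
  obtain ⟨p, q, hp, hq, hpq, rfl⟩ := hw
  have hy : 0 < g y * g y := mul_self_pos.2 fun h0 => by simp [h0] at h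
  simp only [map_add, map_smul, smul_eq_mul]
  rcases hp.eq_or_lt with rfl | hp
  · obtain rfl : q = 1 := by linarith
    linarith
  · nlinarith [mul_pos hp hy, mul_nonneg hq h.le]

theorem eventually_pos_mul_apply_add_smul (g : V →ₗ[ℝ] ℝ) {z : V} (hz : g z ≠ 0) (d : V) :
    ∀ᶠ ε in 𝓝 (0 : ℝ), 0 < g (z + ε • d) * g z := by
  have hcont : Continuous fun ε : ℝ => (g z + ε * g d) * g z := by fun_prop
  simpa using hcont.continuousAt.eventually (lt_mem_nhds (by simpa using hz))

end LinearForms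

theorem pos_mul_iff_of_ne_zero {a b : ℝ} (ha : a ≠ 0) (hb : b ≠ 0) :
    0 < a * b ↔ (0 < a ↔ 0 < b) := by
  rcases ha.lt_or_gt with ha | ha <;> rcases hb.lt_or_gt with hb | hb <;>
    simp [mul_pos_iff, ha, hb, ha.not_gt, hb.not_gt]

theorem pos_neg_mul_iff {ε a : ℝ} (hε : 0 < ε) (ha : a ≠ 0) : 0 < -(ε * a) ↔ ¬ 0 < a := by
  rcases ha.lt_or_gt with h | h
  · simp [h.not_gt, mul_neg_of_pos_of_neg hε h]
  · simp [h, (mul_pos hε h).le]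

theorem pos_mul_trans {a b c : ℝ} (hab : 0 < a * b) (hbc : 0 < b * c) : 0 < a * c := by
  nlinarith [mul_pos hab hbc, mul_self_nonneg b]

theorem pos_mul_of_isPreconnected {X : Type*} [TopologicalSpace X] {f : X → ℝ} {s : Set X}
    (hf : ContinuousOn f s) (hs : IsPreconnected s) (hnz : ∀ x ∈ s, f x ≠ 0) {y z : X}
    (hy : y ∈ s) (hz : z ∈ s) : 0 < f y * f z := by
  have hfy := hnz y hy
  have hfz := hnz z hz
  by_contra! h
  have key : ∀ a ∈ s, ∀ b ∈ s, f a ≤ 0 → 0 ≤ f b → False := fun a ha b hb hab hba => by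
    obtain ⟨x, hx, hx0⟩ := hs.intermediate_value ha hb hf ⟨hab, hba⟩
    exact hnz x hx hx0
  rcases hfy.lt_or_gt with h1 | h1
  · exact key y hy z hz h1.le (by nlinarith)
  · exact key z hz y hy (by nlinarith) h1.le

variable {A : Type} [NormedAddCommGroup A] [InnerProductSpace ℝ A]

theorem Separates.symm {H : Submodule ℝ A} {C D : Set A} (h : Separates H C D) :
    Separates H D C := by
  obtain ⟨f, hker, hpos, hneg⟩ := h
  exact ⟨-f, by rw [LinearMap.ker_neg, hker], fun x hx => by simpa using hneg x hx,
    fun x hx => by simpa using hpos x hx⟩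

/-- The open facet on `ker (f i)` of the simplicial cone `{y | ∀ j, 0 < f j y}`. -/
def facet {ι : Type*} (f : ι → A →ₗ[ℝ] ℝ) (i : ι) : Set A :=
  {z | f i z = 0 ∧ ∀ j, j ≠ i → 0 < f j z}

theorem eventually_add_smul_mem_facet {ι : Type*} [Finite ι] {f : ι → A →ₗ[ℝ] ℝ} {i : ι}
    {z : A} (hz : z ∈ facet f i) {k : A} (hk : f i k = 0) :
    ∀ᶠ ε in 𝓝 (0 : ℝ), z + ε • k ∈ facet f i := by
  have hcont : ∀ j, Continuous fun ε : ℝ => f j z + ε * f j k := fun j => by fun_prop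
  have hj : ∀ j, j ≠ i → ∀ᶠ ε in 𝓝 (0 : ℝ), 0 < f j (z + ε • k) := fun j hj =>
    ((hcont j).continuousAt.eventually (lt_mem_nhds (by simpa using hz.2 j hj))).mono
      fun ε h => by simpa using h
  filter_upwards [Filter.eventually_all.2 fun j => Filter.eventually_imp_distrib_left.2 (hj j)]
    with ε hε
  exact ⟨by simp [hz.1, hk], hε⟩

variable [FiniteDimensional ℝ A] {𝒜 : RealArr A}

theorem RealArr.hypForm_eq_zero_iff {H : Submodule ℝ A} (hH : H ∈ 𝒜.hyps) {a : A} :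
    hypForm H a = 0 ↔ a ∈ H :=
  DelGrpd.hypForm_eq_zero_iff (𝒜.coatoms H hH)

theorem hypForm_ne_zero_of_mem_cmpl {H : Submodule ℝ A} (hH : H ∈ 𝒜.hyps) {y : A}
    (hy : y ∈ cmpl 𝒜) : hypForm H y ≠ 0 :=
  fun h => hy H hH ((𝒜.hypForm_eq_zero_iff hH).1 h)

def sameSide (𝒜 : RealArr A) (a : A) : Set A :=
  {y | ∀ H ∈ 𝒜.hyps, 0 < hypForm H y * hypForm H a}

theorem convex_sameSide (a : A) : Convex ℝ (sameSide 𝒜 a) := by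
  refine fun y hy z hz p q hp hq hpq H hH => ?_
  have hyz := pos_mul_trans (hy H hH) (by rw [mul_comm]; exact hz H hH)
  exact pos_mul_trans (pos_mul_of_mem_segment (hypForm H) hyz ⟨p, q, hp, hq, hpq, rfl⟩) (hy H hH)

theorem sameSide_subset_cmpl (a : A) : sameSide 𝒜 a ⊆ cmpl 𝒜 := fun y hy H hH hyH => by
  simpa [(𝒜.hypForm_eq_zero_iff hH).2 hyH] using hy H hH

theorem mem_sameSide_self {a : A} (ha : a ∈ cmpl 𝒜) : a ∈ sameSide 𝒜 a :=
  fun _ hH => mul_self_pos.2 (hypForm_ne_zero_of_mem_cmpl hH ha)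

namespace Chamber

variable (v : Chamber 𝒜)

def pt : A := v.2.choose

theorem pt_mem_cmpl : v.pt ∈ cmpl 𝒜 := v.2.choose_spec.1

theorem eq_connectedComponentIn : v.1 = connectedComponentIn (cmpl 𝒜) v.pt :=
  v.2.choose_spec.2

theorem pt_mem : v.pt ∈ v.1 := by
  rw [v.eq_connectedComponentIn]; exact mem_connectedComponentIn v.pt_mem_cmpl

theorem eq_sameSide : v.1 = sameSide 𝒜 v.pt := by
  refine Set.Subset.antisymm (fun y hy H hH => ?_) ?_
  · rw [v.eq_connectedComponentIn] at hy
    exact pos_mul_of_isPreconnected (hypForm H).continuous_of_finiteDimensional.continuousOn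
      isPreconnected_connectedComponentIn
      (fun x hx => hypForm_ne_zero_of_mem_cmpl hH (connectedComponentIn_subset _ _ hx)) hy
      (mem_connectedComponentIn v.pt_mem_cmpl)
  · rw [v.eq_connectedComponentIn]
    exact (convex_sameSide v.pt).isPreconnected.subset_connectedComponentIn
      (mem_sameSide_self v.pt_mem_cmpl) (sameSide_subset_cmpl v.pt)

theorem mem_iff {y : A} : y ∈ v.1 ↔ ∀ H ∈ 𝒜.hyps, 0 < hypForm H y * hypForm H v.pt := by
  rw [v.eq_sameSide]; rfl

/-- Sides are propositions, so that "separated by `H`" becomes `¬ (v.side H ↔ w.side H)`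
(`separates_iff`) and all sign bookkeeping below is propositional. -/
def side (H : Submodule ℝ A) : Prop := 0 < hypForm H v.pt

theorem hypForm_pt_ne_zero {H : Submodule ℝ A} (hH : H ∈ 𝒜.hyps) : hypForm H v.pt ≠ 0 :=
  hypForm_ne_zero_of_mem_cmpl hH v.pt_mem_cmpl

theorem side_iff_of_mem {y : A} (hy : y ∈ v.1) {H : Submodule ℝ A} (hH : H ∈ 𝒜.hyps) :
    v.side H ↔ 0 < hypForm H y := by
  have h := (v.mem_iff).1 hy H hH
  exact ((pos_mul_iff_of_ne_zero (fun h0 => by simp [h0] at h) (v.hypForm_pt_ne_zero hH)).1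
    h).symm

theorem eq_of_mem {v w : Chamber 𝒜} {y : A} (hv : y ∈ v.1) (hw : y ∈ w.1) : v = w := by
  apply Subtype.ext
  rw [v.eq_connectedComponentIn] at hv ⊢
  rw [w.eq_connectedComponentIn] at hw ⊢
  rw [connectedComponentIn_eq hv, connectedComponentIn_eq hw]

theorem ext_side {v w : Chamber 𝒜} (h : ∀ H ∈ 𝒜.hyps, (v.side H ↔ w.side H)) : v = w := by
  refine eq_of_mem v.pt_mem ((w.mem_iff).2 fun H hH => ?_)
  exact (pos_mul_iff_of_ne_zero (v.hypForm_pt_ne_zero hH) (w.hypForm_pt_ne_zero hH)).2 (h H hH)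

def ofPoint (y : A) (hy : y ∈ cmpl 𝒜) : Chamber 𝒜 :=
  ⟨connectedComponentIn (cmpl 𝒜) y, y, hy, rfl⟩

theorem side_ofPoint {y : A} (hy : y ∈ cmpl 𝒜) {H : Submodule ℝ A} (hH : H ∈ 𝒜.hyps) :
    (ofPoint y hy).side H ↔ 0 < hypForm H y :=
  side_iff_of_mem _ (mem_connectedComponentIn hy) hH

theorem nonneg_mul_of_mem_closure {c : A} (hc : c ∈ closure v.1) {H : Submodule ℝ A}
    (hH : H ∈ 𝒜.hyps) : 0 ≤ hypForm H c * hypForm H v.pt :=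
  closure_minimal (fun _ hy => ((v.mem_iff).1 hy H hH).le)
    (isClosed_le continuous_const
      ((hypForm H).continuous_of_finiteDimensional.mul continuous_const)) hc

end Chamber

theorem hypForm_mul_neg_iff {H : Submodule ℝ A} (hH : H ∈ 𝒜.hyps) (v w : Chamber 𝒜) :
    hypForm H v.pt * hypForm H w.pt < 0 ↔ ¬ (v.side H ↔ w.side H) := by
  unfold Chamber.side
  rw [← pos_mul_iff_of_ne_zero (v.hypForm_pt_ne_zero hH) (w.hypForm_pt_ne_zero hH), not_lt,
    le_iff_lt_or_eq, or_iff_left (mul_ne_zero (v.hypForm_pt_ne_zero hH)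
      (w.hypForm_pt_ne_zero hH))]

theorem hypForm_eq_zero_of_mem_closure {x z : Chamber 𝒜} {c : A} (hx : c ∈ closure x.1)
    (hz : c ∈ closure z.1) {H : Submodule ℝ A} (hH : H ∈ 𝒜.hyps)
    (hsep : ¬ (x.side H ↔ z.side H)) : hypForm H c = 0 := by
  have hxz := (hypForm_mul_neg_iff hH x z).2 hsep
  by_contra hc
  nlinarith [mul_nonneg (x.nonneg_mul_of_mem_closure hx hH) (z.nonneg_mul_of_mem_closure hz hH),
    mul_self_pos.2 hc]

theorem separates_iff {H : Submodule ℝ A} (hH : H ∈ 𝒜.hyps) (v w : Chamber 𝒜) :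
    Separates H v.1 w.1 ↔ ¬ (v.side H ↔ w.side H) := by
  rw [← hypForm_mul_neg_iff hH]
  constructor
  · rintro ⟨f, hker, hpos, hneg⟩
    obtain ⟨c, rfl⟩ := exists_eq_smul_of_ker_le
      ((ker_hypForm (𝒜.coatoms H hH)).trans hker.symm).le
    have h1 := hpos v.pt v.pt_mem
    have h2 := hneg w.pt w.pt_mem
    simp only [LinearMap.smul_apply, smul_eq_mul] at h1 h2
    by_contra! h
    nlinarith [mul_neg_of_pos_of_neg h1 h2, mul_nonneg (mul_self_nonneg c) h]
  · intro hvw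
    have hv := v.hypForm_pt_ne_zero hH
    have hw := w.hypForm_pt_ne_zero hH
    refine ⟨hypForm H v.pt • hypForm H, ?_, fun y hy => ?_, fun y hy => ?_⟩
    · rw [LinearMap.ker_smul _ _ hv, ker_hypForm (𝒜.coatoms H hH)]
    · have := (v.mem_iff).1 hy H hH
      simp only [LinearMap.smul_apply, smul_eq_mul]
      linarith
    · have := (w.mem_iff).1 hy H hH
      simp only [LinearMap.smul_apply, smul_eq_mul]
      nlinarith [mul_neg_of_neg_of_pos hvw this, mul_self_pos.2 hw]

def sepSet (v w : Chamber 𝒜) : Finset (Submodule ℝ A) :=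
  𝒜.hyps.filter fun H => ¬ (v.side H ↔ w.side H)

@[simp] theorem mem_sepSet {v w : Chamber 𝒜} {H : Submodule ℝ A} :
    H ∈ sepSet v w ↔ H ∈ 𝒜.hyps ∧ ¬ (v.side H ↔ w.side H) :=
  Finset.mem_filter

theorem mem_sepSet_iff_separates {v w : Chamber 𝒜} {H : Submodule ℝ A} :
    H ∈ sepSet v w ↔ H ∈ 𝒜.hyps ∧ Separates H v.1 w.1 := by
  rw [mem_sepSet]
  exact and_congr_right fun hH => (separates_iff hH v w).symm

theorem sepSet_comm (v w : Chamber 𝒜) : sepSet v w = sepSet w v := by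
  ext; simp only [mem_sepSet, iff_comm]

theorem sepSet_eq_empty_iff {v w : Chamber 𝒜} : sepSet v w = ∅ ↔ v = w := by
  refine ⟨fun h => Chamber.ext_side fun H hH => ?_, fun h => by subst h; ext; simp⟩
  by_contra hvw
  simpa [h] using (mem_sepSet (H := H)).2 ⟨hH, hvw⟩

theorem sepSet_subset_union (v m w : Chamber 𝒜) :
    sepSet v w ⊆ sepSet v m ∪ sepSet m w := by
  intro H
  simp only [mem_sepSet, Finset.mem_union]
  tauto

theorem sepSet_eq_erase {v u w : Chamber 𝒜} {H₀ : Submodule ℝ A} (h : sepSet v u = {H₀})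
    (hH₀ : H₀ ∈ sepSet v w) : sepSet u w = (sepSet v w).erase H₀ := by
  have hvu : ∀ H, H ∈ sepSet v u ↔ H = H₀ := by simp [h]
  ext H
  simp only [mem_sepSet, Finset.mem_erase] at hvu hH₀ ⊢
  by_cases hH : H = H₀
  · subst hH; have := hvu H; simp only [iff_true] at this; tauto
  · have := hvu H; tauto

theorem adj_iff {v w : Chamber 𝒜} : Adj 𝒜 v w ↔ ∃ H₀, sepSet v w = {H₀} := by
  simp only [Adj, Finset.eq_singleton_iff_unique_mem, mem_sepSet_iff_separates]
  exact ⟨fun ⟨H₀, h, hu⟩ => ⟨H₀, h, fun H hH => hu H hH⟩,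
    fun ⟨H₀, h, hu⟩ => ⟨H₀, h, fun H hH => hu H hH⟩⟩

theorem Step.exists_sepSet_eq {v w : Chamber 𝒜} : Step 𝒜 v w → ∃ H₀, sepSet v w = {H₀}
  | .pos h => adj_iff.1 h
  | .neg h => sepSet_comm w v ▸ adj_iff.1 h

namespace Face

variable (F : Face 𝒜)

def stratum : Set A := {y | y ∈ F.B ∧ ∀ H ∈ 𝒜.hyps, ¬ F.B ≤ H → y ∉ H}

def pt : A := F.hc.choose

theorem pt_mem_B : F.pt ∈ F.B := F.hc.choose_spec.1

theorem c_eq : F.c = connectedComponentIn F.stratum F.pt := F.hc.choose_spec.2.2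

theorem pt_mem_c : F.pt ∈ F.c := by
  rw [F.c_eq]; exact mem_connectedComponentIn ⟨F.pt_mem_B, F.hc.choose_spec.2.1⟩

/-- Meaningful only for `H` not containing `F.B`. -/
def side (H : Submodule ℝ A) : Prop := 0 < hypForm H F.pt

variable {F}

theorem hypForm_eq_zero_of_le {H : Submodule ℝ A} (hH : H ∈ 𝒜.hyps) (hB : F.B ≤ H) {y : A}
    (hy : y ∈ F.B) : hypForm H y = 0 :=
  (𝒜.hypForm_eq_zero_iff hH).2 (hB hy)

theorem mem_B_of_mem_c {c : A} (hc : c ∈ F.c) : c ∈ F.B :=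
  (connectedComponentIn_subset _ _ (F.c_eq ▸ hc)).1

theorem pos_mul_of_mem_c {H : Submodule ℝ A} (hH : H ∈ 𝒜.hyps) (hB : ¬ F.B ≤ H) {c : A}
    (hc : c ∈ F.c) : 0 < hypForm H c * hypForm H F.pt := by
  rw [F.c_eq] at hc
  exact pos_mul_of_isPreconnected (hypForm H).continuous_of_finiteDimensional.continuousOn
    isPreconnected_connectedComponentIn
    (fun x hx h0 => (connectedComponentIn_subset _ _ hx).2 H hH hB
      ((𝒜.hypForm_eq_zero_iff hH).1 h0)) hc (F.c_eq ▸ F.pt_mem_c)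

theorem hypForm_pt_ne_zero {H : Submodule ℝ A} (hH : H ∈ 𝒜.hyps) (hB : ¬ F.B ≤ H) :
    hypForm H F.pt ≠ 0 := fun h0 => by
  simpa [h0] using pos_mul_of_mem_c hH hB F.pt_mem_c

theorem segment_subset_stratum {y z : A} (hy : y ∈ F.B) (hz : z ∈ F.B)
    (h : ∀ H ∈ 𝒜.hyps, ¬ F.B ≤ H → 0 < hypForm H y * hypForm H z) :
    segment ℝ y z ⊆ F.stratum := by
  refine fun w hw => ⟨F.B.convex.segment_subset hy hz hw, fun H hH hB hwH => ?_⟩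
  have := pos_mul_of_mem_segment (hypForm H) (h H hH hB) hw
  simp [(𝒜.hypForm_eq_zero_iff hH).2 hwH] at this

theorem mem_c_of_segment_subset {y : A} (h : segment ℝ F.pt y ⊆ F.stratum) : y ∈ F.c := by
  rw [F.c_eq]
  exact (convex_segment _ _).isPreconnected.subset_connectedComponentIn
    (left_mem_segment ℝ _ _) h (right_mem_segment ℝ _ _)

theorem vert_iff {v : Chamber 𝒜} :
    F.vert v ↔ ∀ H ∈ 𝒜.hyps, ¬ F.B ≤ H → (v.side H ↔ F.side H) := by
  constructor
  · intro hv H hH hB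
    have h := v.nonneg_mul_of_mem_closure (hv F.pt_mem_c) hH
    have hne := mul_ne_zero (hypForm_pt_ne_zero hH hB) (v.hypForm_pt_ne_zero hH)
    exact ((pos_mul_iff_of_ne_zero (hypForm_pt_ne_zero hH hB) (v.hypForm_pt_ne_zero hH)).1
      (lt_of_le_of_ne h hne.symm)).symm
  · intro h c hc
    have hnonneg : ∀ H ∈ 𝒜.hyps, 0 ≤ hypForm H c * hypForm H v.pt := by
      intro H hH
      by_cases hB : F.B ≤ H
      · rw [hypForm_eq_zero_of_le hH hB (mem_B_of_mem_c hc), zero_mul]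
      · refine (pos_mul_trans (pos_mul_of_mem_c hH hB hc) ?_).le
        exact (pos_mul_iff_of_ne_zero (hypForm_pt_ne_zero hH hB) (v.hypForm_pt_ne_zero hH)).2
          (h H hH hB).symm
    have hmem : ∀ δ : ℝ, 0 < δ → c + δ • v.pt ∈ v.1 := fun δ hδ =>
      (v.mem_iff).2 fun H hH => by
        have := mul_self_pos.2 (v.hypForm_pt_ne_zero hH)
        simp only [map_add, map_smul, smul_eq_mul]
        nlinarith [hnonneg H hH, mul_pos hδ this]
    have hlim : Filter.Tendsto (fun δ : ℝ => c + δ • v.pt) (𝓝[>] 0) (𝓝 c) := by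
      have : Continuous fun δ : ℝ => c + δ • v.pt := by fun_prop
      simpa using (this.tendsto 0).mono_left nhdsWithin_le_nhds
    exact mem_closure_of_tendsto hlim (eventually_nhdsWithin_of_forall hmem)

/-- Perturb `F.pt` towards `-x.pt`: hyperplanes containing `F.B` then see the side opposite to
`x`, the others still see the side of `F`. -/
theorem exists_vert_opposite (F : Face 𝒜) (x : Chamber 𝒜) :
    ∃ z : Chamber 𝒜, F.vert z ∧ ∀ H ∈ 𝒜.hyps, F.B ≤ H → (z.side H ↔ ¬ x.side H) := by
  have hev : ∀ᶠ ε in 𝓝 (0 : ℝ), ∀ H ∈ 𝒜.hyps, ¬ F.B ≤ H →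
      0 < hypForm H (F.pt + ε • -x.pt) * hypForm H F.pt :=
    (Finset.eventually_all _).2 fun H hH => Filter.eventually_imp_distrib_left.2
      fun hB => eventually_pos_mul_apply_add_smul _ (hypForm_pt_ne_zero hH hB) _
  obtain ⟨ε, hε, hεH⟩ := hev.exists_gt
  set y := F.pt + ε • -x.pt
  have hyB : ∀ H ∈ 𝒜.hyps, F.B ≤ H → hypForm H y = -(ε * hypForm H x.pt) := fun H hH hB => by
    simp [y, hypForm_eq_zero_of_le hH hB F.pt_mem_B]
  have hycmpl : y ∈ cmpl 𝒜 := fun H hH hyH => by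
    have h0 := (𝒜.hypForm_eq_zero_iff hH).2 hyH
    by_cases hB : F.B ≤ H
    · rw [hyB H hH hB, neg_eq_zero] at h0
      exact mul_ne_zero hε.ne' (x.hypForm_pt_ne_zero hH) h0
    · simpa [h0] using hεH H hH hB
  refine ⟨Chamber.ofPoint y hycmpl, vert_iff.2 fun H hH hB => ?_, fun H hH hB => ?_⟩
  · have h := hεH H hH hB
    rw [Chamber.side_ofPoint hycmpl hH, Face.side]
    exact (pos_mul_iff_of_ne_zero (fun h0 => by simp [h0] at h) (hypForm_pt_ne_zero hH hB)).1 h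
  · rw [Chamber.side_ofPoint hycmpl hH, hyB H hH hB]
    exact pos_neg_mul_iff hε (x.hypForm_pt_ne_zero hH)

theorem exists_add_smul_mem_c {k : A} (hk : k ∈ F.B) : ∃ ε : ℝ, 0 < ε ∧ F.pt + ε • k ∈ F.c := by
  have hev : ∀ᶠ ε in 𝓝 (0 : ℝ), ∀ H ∈ 𝒜.hyps, ¬ F.B ≤ H →
      0 < hypForm H (F.pt + ε • k) * hypForm H F.pt :=
    (Finset.eventually_all _).2 fun H hH => Filter.eventually_imp_distrib_left.2
      fun hB => eventually_pos_mul_apply_add_smul _ (hypForm_pt_ne_zero hH hB) _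
  obtain ⟨ε, hε, hεH⟩ := hev.exists_gt
  refine ⟨ε, hε, mem_c_of_segment_subset (segment_subset_stratum F.pt_mem_B
    (F.B.add_mem F.pt_mem_B (F.B.smul_mem ε hk)) fun H hH hB => ?_)⟩
  rw [mul_comm]
  exact hεH H hH hB

theorem B_le_of_c_subset {H : Submodule ℝ A} (h : F.c ⊆ H) : F.B ≤ H := by
  intro k hk
  obtain ⟨ε, hε, hmem⟩ := exists_add_smul_mem_c hk
  have : ε • k ∈ H := by simpa using H.sub_mem (h hmem) (h F.pt_mem_c)
  exact (H.smul_mem_iff hε.ne').1 this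

theorem ext_of_B_eq {F F' : Face 𝒜} (hB : F.B = F'.B) (hc : F.c = F'.c) : F = F' := by
  cases F; cases F'
  simp only at hB hc
  subst hB hc
  rfl

end Face

theorem exists_mem_cmpl (𝒜 : RealArr A) : ∃ y : A, y ∈ cmpl 𝒜 := by
  obtain ⟨y, hy⟩ := Submodule.exists_forall_notMem_of_forall_ne_top
    (fun H : 𝒜.hyps => (H : Submodule ℝ A)) fun H => (𝒜.coatoms H H.2).1
  exact ⟨y, fun H hH => hy ⟨H, hH⟩⟩

theorem Face.exists_vert (F : Face 𝒜) : ∃ z : Chamber 𝒜, F.vert z := by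
  obtain ⟨y, hy⟩ := exists_mem_cmpl 𝒜
  obtain ⟨z, hz, -⟩ := F.exists_vert_opposite (Chamber.ofPoint y hy)
  exact ⟨z, hz⟩

theorem Face.side_iff_of_vert {F : Face 𝒜} {x y : Chamber 𝒜} (hx : F.vert x) (hy : F.vert y)
    {H : Submodule ℝ A} (hH : H ∈ 𝒜.hyps) (hB : ¬ F.B ≤ H) : x.side H ↔ y.side H :=
  (Face.vert_iff.1 hx H hH hB).trans (Face.vert_iff.1 hy H hH hB).symm

theorem Face.le.B_le_of_le {F F₀ : Face 𝒜} (hle : F.le F₀) {H : Submodule ℝ A}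
    (hH : H ∈ 𝒜.hyps) (hB : F.B ≤ H) : F₀.B ≤ H := by
  obtain ⟨x, hx⟩ := F.exists_vert
  obtain ⟨z, hz, hzx⟩ := F.exists_vert_opposite x
  -- `x` and `z` are vertices of `F₀` on opposite sides of `H`, so `F₀.c` lies in `H`.
  refine F₀.B_le_of_c_subset fun c hc => (𝒜.hypForm_eq_zero_iff hH).1 ?_
  exact hypForm_eq_zero_of_mem_closure (hle x hx hc) (hle z hz hc) hH
    (by have := hzx H hH hB; tauto)

theorem Face.le.B_le {F F₀ : Face 𝒜} (hle : F.le F₀) : F₀.B ≤ F.B := by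
  obtain ⟨S, hS, hBS⟩ := F.hB
  rw [hBS]
  exact Finset.le_inf fun H hH => hle.B_le_of_le (hS hH) (hBS ▸ Finset.inf_le hH)

theorem isAnt_iff {G : Face 𝒜} {x y : Chamber 𝒜} :
    IsAnt G x y ↔ G.vert x ∧ G.vert y ∧ ∀ H ∈ 𝒜.hyps, (G.B ≤ H ↔ ¬ (x.side H ↔ y.side H)) :=
  and_congr_right fun _ => and_congr_right fun _ =>
    forall₂_congr fun H hH => by rw [separates_iff hH]

theorem exists_isAnt {G : Face 𝒜} {x : Chamber 𝒜} (hx : G.vert x) : ∃ y, IsAnt G x y := by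
  obtain ⟨z, hz, hzx⟩ := G.exists_vert_opposite x
  refine ⟨z, isAnt_iff.2 ⟨hx, hz, fun H hH => ⟨fun hB => ?_, fun h => ?_⟩⟩⟩
  · have := hzx H hH hB; tauto
  · by_contra hB
    exact h (Face.side_iff_of_vert hx hz hH hB)

theorem IsAnt.le_of_mem_sepSet {G : Face 𝒜} {x y : Chamber 𝒜} (h : IsAnt G x y)
    {H : Submodule ℝ A} (hH : H ∈ sepSet x y) : G.B ≤ H :=
  ((isAnt_iff.1 h).2.2 H (mem_sepSet.1 hH).1).2 (mem_sepSet.1 hH).2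

theorem DualEdge.B_le {F : Face 𝒜} {H : Submodule ℝ A} (h : DualEdge F H) : F.B ≤ H := by
  obtain ⟨hH, v, w, hv, hw, -, hsep⟩ := h
  by_contra hB
  exact (separates_iff hH v w).1 hsep (Face.side_iff_of_vert hv hw hH hB)

theorem ParTrans.side_iff {F F' : Face 𝒜} {x x' : Chamber 𝒜} (h : ParTrans F F' x x')
    {H : Submodule ℝ A} (hH : H ∈ 𝒜.hyps) (hB : F.B ≤ H) : x.side H ↔ x'.side H := by
  have := h.2.2.2 H hH hB
  rw [separates_iff hH] at this
  tauto

theorem ParTrans.not_le_of_mem_sepSet {F F' : Face 𝒜} {x x' : Chamber 𝒜}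
    (h : ParTrans F F' x x') {H : Submodule ℝ A} (hH : H ∈ sepSet x x') : ¬ F.B ≤ H :=
  fun hB => (mem_sepSet.1 hH).2 (h.side_iff (mem_sepSet.1 hH).1 hB)

structure ParallelFacets (F F' F₀ : Face 𝒜) : Prop where
  B_eq : F.B = F'.B
  ne : F ≠ F'
  le_left : F.le F₀
  le_right : F'.le F₀
  finrank_eq : Module.finrank ℝ F.B = Module.finrank ℝ F₀.B + 1

namespace ParallelFacets

variable {F F' F₀ : Face 𝒜}

theorem side_iff_of_not_le (hP : ParallelFacets F F' F₀) {H : Submodule ℝ A}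
    (hH : H ∈ 𝒜.hyps) (h₀ : ¬ F₀.B ≤ H) : F.side H ↔ F'.side H := by
  have hB : ¬ F.B ≤ H := fun h => h₀ (hP.le_left.B_le.trans h)
  obtain ⟨x, hx⟩ := F.exists_vert
  obtain ⟨x', hx'⟩ := F'.exists_vert
  have h₁ := Face.vert_iff.1 hx H hH hB
  have h₂ := Face.vert_iff.1 hx' H hH (hP.B_eq ▸ hB)
  have h₃ := Face.side_iff_of_vert (hP.le_left x hx) (hP.le_right x' hx') hH h₀
  tauto

theorem exists_not_side_iff (hP : ParallelFacets F F' F₀) :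
    ∃ H ∈ 𝒜.hyps, ¬ F.B ≤ H ∧ ¬ (F.side H ↔ F'.side H) := by
  by_contra! h
  -- Otherwise the segment from `F.pt` to `F'.pt` stays in the stratum, so `F.c = F'.c`.
  have hseg : segment ℝ F.pt F'.pt ⊆ F.stratum := by
    refine Face.segment_subset_stratum F.pt_mem_B (hP.B_eq ▸ F'.pt_mem_B) fun H hH hB => ?_
    exact (pos_mul_iff_of_ne_zero (Face.hypForm_pt_ne_zero hH hB)
      (Face.hypForm_pt_ne_zero hH (hP.B_eq ▸ hB))).2 (h H hH hB)
  have hstratum : F.stratum = F'.stratum := by simp only [Face.stratum, hP.B_eq]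
  refine hP.ne (Face.ext_of_B_eq hP.B_eq ?_)
  rw [F.c_eq, F'.c_eq, ← hstratum]
  exact connectedComponentIn_eq (F.c_eq ▸ Face.mem_c_of_segment_subset hseg)

theorem inf_B_eq (hP : ParallelFacets F F' F₀) {H : Submodule ℝ A} (h₀ : F₀.B ≤ H)
    (hB : ¬ F.B ≤ H) : H ⊓ F.B = F₀.B := by
  have hlt : H ⊓ F.B < F.B := inf_le_right.lt_of_ne fun h => hB (h ▸ inf_le_left)
  have := Submodule.finrank_lt_finrank_of_lt hlt
  exact (Submodule.eq_of_le_of_finrank_le (le_inf h₀ hP.le_left.B_le)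
    (by rw [hP.finrank_eq] at this; omega)).symm

theorem side_iff_iff (hP : ParallelFacets F F' F₀) {H₁ H₂ : Submodule ℝ A}
    (h₁ : H₁ ∈ 𝒜.hyps) (h₂ : H₂ ∈ 𝒜.hyps) (h₀₁ : F₀.B ≤ H₁) (h₀₂ : F₀.B ≤ H₂)
    (hB₁ : ¬ F.B ≤ H₁) (hB₂ : ¬ F.B ≤ H₂) :
    (F.side H₁ ↔ F'.side H₁) ↔ (F.side H₂ ↔ F'.side H₂) := by
  -- Restricted to `F.B`, both forms have kernel `F₀.B`, hence are proportional.
  have hker : LinearMap.ker ((hypForm H₁).comp F.B.subtype)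
      = LinearMap.ker ((hypForm H₂).comp F.B.subtype) := by
    ext b
    have h := congrArg (b.1 ∈ ·) ((hP.inf_B_eq h₀₁ hB₁).trans (hP.inf_B_eq h₀₂ hB₂).symm)
    simp only [Submodule.mem_inf, b.2, and_true, eq_iff_iff] at h
    simp only [LinearMap.mem_ker, LinearMap.comp_apply, Submodule.coe_subtype,
      𝒜.hypForm_eq_zero_iff h₁, 𝒜.hypForm_eq_zero_iff h₂, h]
  have h := pos_mul_iff_of_ker_eq hker ⟨F.pt, F.pt_mem_B⟩ ⟨F'.pt, hP.B_eq ▸ F'.pt_mem_B⟩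
  simp only [LinearMap.comp_apply, Submodule.coe_subtype] at h
  rwa [pos_mul_iff_of_ne_zero (Face.hypForm_pt_ne_zero h₁ hB₁)
      (Face.hypForm_pt_ne_zero h₁ (hP.B_eq ▸ hB₁)),
    pos_mul_iff_of_ne_zero (Face.hypForm_pt_ne_zero h₂ hB₂)
      (Face.hypForm_pt_ne_zero h₂ (hP.B_eq ▸ hB₂))] at h

theorem not_side_iff_iff_le (hP : ParallelFacets F F' F₀) {H : Submodule ℝ A}
    (hH : H ∈ 𝒜.hyps) (hB : ¬ F.B ≤ H) : ¬ (F.side H ↔ F'.side H) ↔ F₀.B ≤ H := by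
  refine ⟨fun h => by_contra fun h₀ => h (hP.side_iff_of_not_le hH h₀), fun h₀ => ?_⟩
  obtain ⟨H₁, h₁, hB₁, hflip⟩ := hP.exists_not_side_iff
  have h₀₁ : F₀.B ≤ H₁ := by_contra fun h => hflip (hP.side_iff_of_not_le h₁ h)
  rwa [← hP.side_iff_iff h₁ hH h₀₁ h₀ hB₁ hB]

theorem side_iff_side_iff (hP : ParallelFacets F F' F₀) {x x' : Chamber 𝒜} (hx : F.vert x)
    (hx' : F'.vert x') {H : Submodule ℝ A} (hH : H ∈ 𝒜.hyps) (hB : ¬ F.B ≤ H) :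
    (x.side H ↔ x'.side H) ↔ ¬ F₀.B ≤ H := by
  have h₁ := Face.vert_iff.1 hx H hH hB
  have h₂ := Face.vert_iff.1 hx' H hH (hP.B_eq ▸ hB)
  have h₃ := hP.not_side_iff_iff_le hH hB
  tauto

theorem vert_of_isAnt (hP : ParallelFacets F F' F₀) {x y : Chamber 𝒜} (hx : F.vert x)
    (hxy : IsAnt F₀ x y) : F'.vert y := by
  obtain ⟨x', hx'⟩ := F'.exists_vert
  refine Face.vert_iff.2 fun H hH hB' => ?_
  have hB : ¬ F.B ≤ H := hP.B_eq ▸ hB'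
  have h₁ := hP.side_iff_side_iff hx hx' hH hB
  have h₂ := (isAnt_iff.1 hxy).2.2 H hH
  have h₃ := Face.vert_iff.1 hx' H hH hB'
  tauto

theorem isAnt_of_parTrans (hP : ParallelFacets F F' F₀) {x x' y : Chamber 𝒜}
    (hxx' : ParTrans F F' x x') (hxy : IsAnt F₀ x y) : IsAnt F' x' y := by
  refine isAnt_iff.2 ⟨hxx'.2.2.1, hP.vert_of_isAnt hxx'.2.1 hxy, fun H hH => ?_⟩
  have h₂ := (isAnt_iff.1 hxy).2.2 H hH
  rw [← hP.B_eq]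
  by_cases hB : F.B ≤ H
  · have := hxx'.side_iff hH hB
    have := hP.le_left.B_le_of_le hH hB
    tauto
  · have := hP.side_iff_side_iff hxx'.2.1 hxx'.2.2.1 hH hB
    tauto

end ParallelFacets

section SimplicialChamber

variable {f : Fin (Module.finrank ℝ A) → A →ₗ[ℝ] ℝ}

theorem exists_forall_apply_eq (hf : LinearIndependent ℝ f) (c : Fin (Module.finrank ℝ A) → ℝ) :
    ∃ z : A, ∀ i, f i z = c i := by
  rcases isEmpty_or_nonempty (Fin (Module.finrank ℝ A)) with hι | hι
  · exact ⟨0, fun i => hι.elim i⟩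
  have hcard : Fintype.card (Fin (Module.finrank ℝ A)) = Module.finrank ℝ (Module.Dual ℝ A) := by
    rw [Subspace.dual_finrank_eq, Fintype.card_fin]
  let b := basisOfLinearIndependentOfCardEqFinrank hf hcard
  have hb : ∀ j, b j = f j := fun j => by simp [b]
  refine ⟨(Module.evalEquiv ℝ A).symm (∑ i, c i • b.dualBasis i), fun j => ?_⟩
  rw [← hb j, Module.apply_evalEquiv_symm_apply]
  simp [Finsupp.single_apply]

theorem facet_nonempty (hf : LinearIndependent ℝ f) (i : Fin (Module.finrank ℝ A)) :
    (facet f i).Nonempty := by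
  obtain ⟨z, hz⟩ := exists_forall_apply_eq hf fun j => if j = i then 0 else 1
  exact ⟨z, by simpa using hz i, fun j hj => by simp [hz j, hj]⟩

theorem exists_mem_facet_forall_notMem (hf : LinearIndependent ℝ f)
    (i : Fin (Module.finrank ℝ A)) :
    ∃ z ∈ facet f i, ∀ H ∈ 𝒜.hyps, H ≠ LinearMap.ker (f i) → z ∉ H := by
  set K := LinearMap.ker (f i)
  have hK : IsCoatom K := LinearMap.isCoatom_ker_of_surjective
    ((f i).surjective_or_eq_zero.resolve_right (hf.ne_zero i))
  obtain ⟨k, hk⟩ := Submodule.exists_forall_notMem_of_forall_ne_top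
    (fun H : 𝒜.hyps.erase K => H.1.comap K.subtype) fun H htop => by
      have hKH : K ≤ H.1 := Submodule.comap_subtype_eq_top.1 htop
      obtain ⟨hHK, hH⟩ := Finset.mem_erase.1 H.2
      exact hHK (((hK.le_iff.1 hKH).resolve_left (𝒜.coatoms _ hH).1))
  obtain ⟨z₀, hz₀⟩ := facet_nonempty hf i
  -- Move from `z₀` along a direction `k` of `ker (f i)` lying in no other hyperplane.
  have hev : ∀ᶠ ε in 𝓝 (0 : ℝ), z₀ + ε • (k : A) ∈ facet f i ∧ ∀ H ∈ 𝒜.hyps,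
      hypForm H z₀ ≠ 0 → 0 < hypForm H (z₀ + ε • (k : A)) * hypForm H z₀ :=
    (eventually_add_smul_mem_facet hz₀ (LinearMap.mem_ker.1 k.2)).and
      ((Finset.eventually_all 𝒜.hyps).2 fun H _ => Filter.eventually_imp_distrib_left.2
        fun h => eventually_pos_mul_apply_add_smul (hypForm H) h (k : A))
  obtain ⟨ε, hε, hfacet, hpos⟩ := hev.exists_gt
  refine ⟨_, hfacet, fun H hH hHK hzH => ?_⟩
  have h0 := (𝒜.hypForm_eq_zero_iff hH).2 hzH
  by_cases hz₀H : hypForm H z₀ = 0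
  · simp only [map_add, map_smul, hz₀H, zero_add, smul_eq_mul, mul_eq_zero, hε.ne',
      false_or] at h0
    exact hk ⟨H, Finset.mem_erase.2 ⟨hHK, hH⟩⟩ ((𝒜.hypForm_eq_zero_iff hH).1 h0)
  · simpa [h0] using hpos H hH hz₀H

variable {v : Chamber 𝒜}

theorem add_smul_pt_mem (hv : v.1 = {y | ∀ j, 0 < f j y}) {i : Fin (Module.finrank ℝ A)} {z : A}
    (hz : z ∈ facet f i) {δ : ℝ} (hδ : 0 < δ) : z + δ • v.pt ∈ v.1 := by
  have hpt : ∀ j, 0 < f j v.pt := by simpa [hv] using v.pt_mem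
  rw [hv]
  intro j
  have hzj : 0 ≤ f j z := if hj : j = i then hj ▸ hz.1.ge else (hz.2 j hj).le
  simpa using add_pos_of_nonneg_of_pos hzj (mul_pos hδ (hpt j))

theorem pos_mul_of_mem_facet (hv : v.1 = {y | ∀ j, 0 < f j y})
    {i : Fin (Module.finrank ℝ A)} {z : A} (hz : z ∈ facet f i) {H : Submodule ℝ A}
    (hH : H ∈ 𝒜.hyps) (hzH : hypForm H z ≠ 0) : 0 < hypForm H z * hypForm H v.pt := by
  obtain ⟨δ, hδ, h⟩ := (eventually_pos_mul_apply_add_smul (hypForm H) hzH v.pt).exists_gt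
  exact pos_mul_trans (by rwa [mul_comm] at h) ((v.mem_iff).1 (add_smul_pt_mem hv hz hδ) H hH)

theorem notMem_cmpl_of_mem_facet (hv : v.1 = {y | ∀ j, 0 < f j y})
    {i : Fin (Module.finrank ℝ A)} {z : A} (hz : z ∈ facet f i) : z ∉ cmpl 𝒜 := fun hc => by
  have : z ∈ v.1 := (v.mem_iff).2 fun H hH =>
    pos_mul_of_mem_facet hv hz hH (hypForm_ne_zero_of_mem_cmpl hH hc)
  rw [hv] at this
  exact (this i).ne' hz.1

theorem ker_mem_hyps (hv : v.1 = {y | ∀ j, 0 < f j y}) (hf : LinearIndependent ℝ f)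
    (i : Fin (Module.finrank ℝ A)) : LinearMap.ker (f i) ∈ 𝒜.hyps := by
  obtain ⟨z, hz, hgen⟩ := exists_mem_facet_forall_notMem (𝒜 := 𝒜) hf i
  -- The generic point `z` of the facet lies on some hyperplane, which can only be `ker (f i)`.
  obtain ⟨H, hH, hzH⟩ : ∃ H ∈ 𝒜.hyps, z ∈ H := by
    simpa [cmpl] using notMem_cmpl_of_mem_facet hv hz
  by_contra hK
  exact hgen H hH (fun h => hK (h ▸ hH)) hzH

theorem exists_ker_mem_sepSet (hv : v.1 = {y | ∀ j, 0 < f j y}) (hf : LinearIndependent ℝ f)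
    {w : Chamber 𝒜} (hne : v ≠ w) : ∃ i, LinearMap.ker (f i) ∈ sepSet v w := by
  by_contra! h
  refine hne (Chamber.eq_of_mem ?_ w.pt_mem)
  rw [hv]
  intro i
  have hK := ker_mem_hyps hv hf i
  have hside : v.side (LinearMap.ker (f i)) ↔ w.side (LinearMap.ker (f i)) := by
    simpa [hK] using h i
  have hvw := (pos_mul_iff_of_ne_zero (v.hypForm_pt_ne_zero hK) (w.hypForm_pt_ne_zero hK)).2 hside
  rw [pos_mul_iff_of_ker_eq (ker_hypForm (𝒜.coatoms _ hK))] at hvw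
  have hv_pos : 0 < f i v.pt := by
    have := v.pt_mem
    rw [hv] at this
    exact this i
  exact pos_of_mul_pos_right hvw hv_pos.le

theorem exists_sepSet_eq_singleton (hv : v.1 = {y | ∀ j, 0 < f j y})
    (hf : LinearIndependent ℝ f) (i : Fin (Module.finrank ℝ A)) :
    ∃ u : Chamber 𝒜, sepSet v u = {LinearMap.ker (f i)} := by
  set K := LinearMap.ker (f i)
  have hK := ker_mem_hyps hv hf i
  obtain ⟨z, hz, hgen⟩ := exists_mem_facet_forall_notMem (𝒜 := 𝒜) hf i
  have hzH : ∀ H ∈ 𝒜.hyps, H ≠ K → hypForm H z ≠ 0 := fun H hH hHK h0 =>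
    hgen H hH hHK ((𝒜.hypForm_eq_zero_iff hH).1 h0)
  -- Push the generic point `z` of the facet slightly across `K`, away from `v`.
  have hev : ∀ᶠ ε in 𝓝 (0 : ℝ), ∀ H ∈ 𝒜.hyps, H ≠ K →
      0 < hypForm H (z + ε • -v.pt) * hypForm H z :=
    (Finset.eventually_all _).2 fun H hH => Filter.eventually_imp_distrib_left.2
      fun hHK => eventually_pos_mul_apply_add_smul _ (hzH H hH hHK) _
  obtain ⟨ε, hε, hεH⟩ := hev.exists_gt
  set y := z + ε • -v.pt
  have hzK : hypForm K z = 0 := (𝒜.hypForm_eq_zero_iff hK).2 (LinearMap.mem_ker.2 hz.1)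
  have hyK : hypForm K y = -(ε * hypForm K v.pt) := by simp [y, hzK]
  have hy : y ∈ cmpl 𝒜 := fun H hH hyH => by
    have h0 := (𝒜.hypForm_eq_zero_iff hH).2 hyH
    by_cases hHK : H = K
    · subst hHK
      rw [hyK, neg_eq_zero] at h0
      exact mul_ne_zero hε.ne' (v.hypForm_pt_ne_zero hH) h0
    · simpa [h0] using hεH H hH hHK
  refine ⟨Chamber.ofPoint y hy, Finset.eq_singleton_iff_unique_mem.2 ⟨?_, fun H hH => ?_⟩⟩
  · rw [mem_sepSet, Chamber.side_ofPoint hy hK, hyK, pos_neg_mul_iff hε (v.hypForm_pt_ne_zero hK)]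
    exact ⟨hK, iff_not_self⟩
  · obtain ⟨hH', hsep⟩ := mem_sepSet.1 hH
    by_contra hHK
    have hyv := pos_mul_trans (hεH H hH' hHK) (pos_mul_of_mem_facet hv hz hH' (hzH H hH' hHK))
    rw [Chamber.side_ofPoint hy hH'] at hsep
    exact hsep ((pos_mul_iff_of_ne_zero (fun h0 => by simp [h0] at hyv)
      (v.hypForm_pt_ne_zero hH')).1 hyv).symm

end SimplicialChamber

theorem exists_sepSet_eq_singleton_mem (hsimp : Simplicial 𝒜) {v w : Chamber 𝒜} (hne : v ≠ w) :
    ∃ u H₀, sepSet v u = {H₀} ∧ H₀ ∈ sepSet v w := by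
  obtain ⟨f, hf, hv⟩ := hsimp v.1 v.2
  obtain ⟨i, hi⟩ := exists_ker_mem_sepSet hv hf hne
  obtain ⟨u, hu⟩ := exists_sepSet_eq_singleton hv hf i
  exact ⟨u, _, hu, hi⟩

namespace Path

theorem length_comp {x y z : Chamber 𝒜} (p : Path 𝒜 x y) (q : Path 𝒜 y z) :
    (p.comp q).length = p.length + q.length := by
  induction p with
  | nil _ => simp [comp, length]
  | cons s p ih => simp only [comp, length, ih]; omega

theorem Positive.comp {x y z : Chamber 𝒜} {p : Path 𝒜 x y} {q : Path 𝒜 y z} (hp : p.Positive)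
    (hq : q.Positive) : (p.comp q).Positive := by
  induction p with
  | nil _ => exact hq
  | cons s p ih =>
    cases s with
    | pos _ => exact ih hp hq
    | neg _ => exact hp.elim

theorem Minimal.of_cons {x y z : Chamber 𝒜} {s : Step 𝒜 x y} {p : Path 𝒜 y z}
    (h : (Path.cons s p).Minimal) : p.Minimal :=
  fun q => Nat.le_of_succ_le_succ (h (.cons s q))

theorem card_sepSet_le_length {x y : Chamber 𝒜} (p : Path 𝒜 x y) :
    (sepSet x y).card ≤ p.length := by
  induction p with
  | nil x => simp [sepSet_eq_empty_iff.2 rfl]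
  | @cons x m y s p ih =>
    obtain ⟨H₀, hH₀⟩ := s.exists_sepSet_eq
    calc (sepSet x y).card ≤ (sepSet x m ∪ sepSet m y).card :=
          Finset.card_le_card (sepSet_subset_union x m y)
      _ ≤ (sepSet x m).card + (sepSet m y).card := Finset.card_union_le _ _
      _ ≤ p.length + 1 := by rw [hH₀, Finset.card_singleton]; omega

theorem minimal_of_length_eq {x y : Chamber 𝒜} {p : Path 𝒜 x y}
    (h : p.length = (sepSet x y).card) : p.Minimal :=
  fun q => h ▸ card_sepSet_le_length q

end Path

theorem exists_positive_path (hsimp : Simplicial 𝒜) (v w : Chamber 𝒜) :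
    ∃ p : Path 𝒜 v w, p.Positive ∧ p.length = (sepSet v w).card := by
  obtain ⟨n, hn⟩ : ∃ n, (sepSet v w).card = n := ⟨_, rfl⟩
  induction n generalizing v with
  | zero =>
    obtain rfl := sepSet_eq_empty_iff.1 (Finset.card_eq_zero.1 hn)
    exact ⟨.nil v, trivial, hn.symm⟩
  | succ n ih =>
    have hne : v ≠ w := by rintro rfl; simp [sepSet_eq_empty_iff.2 rfl] at hn
    obtain ⟨u, H₀, hu, hH₀⟩ := exists_sepSet_eq_singleton_mem hsimp hne
    have hcard : (sepSet u w).card = n := by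
      rw [sepSet_eq_erase hu hH₀, Finset.card_erase_of_mem hH₀, hn, Nat.add_sub_cancel]
    obtain ⟨p, hp, hlen⟩ := ih u hcard
    exact ⟨.cons (.pos (adj_iff.2 ⟨H₀, hu⟩)) p, hp, by
      show p.length + 1 = _
      rw [hlen, hcard, hn]⟩

namespace Path

theorem minimal_iff (hsimp : Simplicial 𝒜) {x y : Chamber 𝒜} {p : Path 𝒜 x y} :
    p.Minimal ↔ p.length = (sepSet x y).card := by
  refine ⟨fun h => ?_, minimal_of_length_eq⟩
  obtain ⟨q, -, hq⟩ := exists_positive_path hsimp x y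
  exact le_antisymm (hq ▸ h q) (card_sepSet_le_length p)

theorem Minimal.comp (hsimp : Simplicial 𝒜) {x y z : Chamber 𝒜} {p : Path 𝒜 x y}
    {q : Path 𝒜 y z} (hp : p.Minimal) (hq : q.Minimal)
    (hdisj : ∀ H ∈ sepSet x y, H ∉ sepSet y z) : (p.comp q).Minimal := by
  have hunion : sepSet x z = sepSet x y ∪ sepSet y z := by
    ext H
    have := hdisj H
    simp only [mem_sepSet, Finset.mem_union] at this ⊢
    tauto
  refine minimal_of_length_eq ?_
  rw [length_comp, (minimal_iff hsimp).1 hp, (minimal_iff hsimp).1 hq, hunion,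
    Finset.card_union_of_disjoint (Finset.disjoint_left.2 hdisj)]

end Path

theorem Step.sign_symm {x y : Chamber 𝒜} (s : Step 𝒜 x y) : s.symm.sign = -s.sign := by
  cases s <;> rfl

namespace Path

variable {H : Submodule ℝ A}

theorem icount_cons {x m y : Chamber 𝒜} (s : Step 𝒜 x m) (p : Path 𝒜 m y) :
    (Path.cons s p).icount H = (if Separates H x.1 m.1 then s.sign else 0) + p.icount H := rfl

theorem icount_comp {x y z : Chamber 𝒜} (p : Path 𝒜 x y) (q : Path 𝒜 y z) :
    (p.comp q).icount H = p.icount H + q.icount H := by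
  induction p with
  | nil _ => simp [comp, icount]
  | cons s p ih => rw [comp, icount_cons, icount_cons, ih, add_assoc]

theorem icount_inv {x y : Chamber 𝒜} (p : Path 𝒜 x y) : p.inv.icount H = -p.icount H := by
  induction p with
  | nil _ => rfl
  | @cons x m y s p ih =>
    rw [inv, icount_comp, ih, icount_cons, icount_cons, icount, Step.sign_symm]
    by_cases h : Separates H x.1 m.1
    · simp [h, h.symm]
    · have h' : ¬ Separates H m.1 x.1 := fun h' => h h'.symm
      simp [h, h']

theorem icount_nonneg {x y : Chamber 𝒜} {p : Path 𝒜 x y} (hp : p.Positive) : 0 ≤ p.icount H := by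
  induction p with
  | nil _ => exact le_rfl
  | cons s p ih =>
    cases s with
    | pos _ =>
      have := ih hp
      simp only [icount_cons, Step.sign]
      split_ifs <;> omega
    | neg _ => exact hp.elim

theorem one_le_icount {x y : Chamber 𝒜} {p : Path 𝒜 x y} (hp : p.Positive)
    (hH : H ∈ sepSet x y) : 1 ≤ p.icount H := by
  induction p with
  | nil _ => simp [sepSet_eq_empty_iff.2 rfl] at hH
  | @cons x m y s p ih =>
    cases s with
    | pos _ =>
      have hp' : p.Positive := hp
      rw [icount_cons]
      by_cases hsep : Separates H x.1 m.1
      · simp only [hsep, if_true, Step.sign]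
        linarith [icount_nonneg (H := H) hp']
      · have hmy : H ∈ sepSet m y := by
          obtain ⟨hH', hxy⟩ := mem_sepSet.1 hH
          rw [separates_iff hH'] at hsep
          exact mem_sepSet.2 ⟨hH', by tauto⟩
        simp only [hsep, if_false, zero_add]
        exact ih hp hmy
    | neg _ => exact hp.elim

theorem length_eq_sum_icount {x y : Chamber 𝒜} {p : Path 𝒜 x y} (hp : p.Positive) :
    (p.length : ℤ) = ∑ H ∈ 𝒜.hyps, p.icount H := by
  induction p with
  | nil _ => simp [length, icount]
  | @cons x m y s p ih =>
    cases s with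
    | pos h =>
      have hfilter : 𝒜.hyps.filter (fun H => Separates H x.1 m.1) = sepSet x m := by
        ext H
        rw [Finset.mem_filter, mem_sepSet_iff_separates]
      obtain ⟨H₀, hH₀⟩ := adj_iff.1 h
      simp only [icount_cons, Step.sign, Finset.sum_add_distrib, Finset.sum_boole, hfilter, hH₀,
        Finset.card_singleton, ← ih hp, length, Nat.cast_add, Nat.cast_one]
      ring
    | neg _ => exact hp.elim

end Path

namespace Path

variable {H : Submodule ℝ A}

theorem icount_eq_ite (hsimp : Simplicial 𝒜) {x y : Chamber 𝒜} {p : Path 𝒜 x y}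
    (hp : p.Positive) (hmin : p.Minimal) (hH : H ∈ 𝒜.hyps) :
    p.icount H = if H ∈ sepSet x y then 1 else 0 := by
  -- Each separating hyperplane is crossed at least once, and there are `|sepSet x y|` crossings.
  have hle : ∀ K ∈ 𝒜.hyps, (if K ∈ sepSet x y then (1 : ℤ) else 0) ≤ p.icount K := fun K _ => by
    split_ifs with hK
    · exact one_le_icount hp hK
    · exact icount_nonneg hp
  have hsum : ∑ K ∈ 𝒜.hyps, (if K ∈ sepSet x y then (1 : ℤ) else 0) = ∑ K ∈ 𝒜.hyps, p.icount K := by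
    rw [← length_eq_sum_icount hp, (minimal_iff hsimp).1 hmin, Finset.sum_boole]
    congr 2
    ext K
    simp only [Finset.mem_filter, mem_sepSet, and_iff_right_iff_imp, and_imp]
    exact fun h _ => h
  exact ((Finset.sum_eq_sum_iff_of_le hle).1 hsum H hH).symm

theorem icount_eq_of_rel (hsimp : Simplicial 𝒜) {x y : Chamber 𝒜} {p q : Path 𝒜 x y}
    (h : Rel 𝒜 p q) (hH : H ∈ 𝒜.hyps) : p.icount H = q.icount H := by
  induction h with
  | refl _ => rfl
  | symm _ ih => exact ih.symm
  | trans _ _ ih₁ ih₂ => exact ih₁.trans ih₂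
  | cancel p => rw [icount_comp, icount_inv, add_neg_cancel]; rfl
  | inv _ ih => rw [icount_inv, icount_inv, ih]
  | congr_left _ _ ih => rw [icount_comp, icount_comp, ih]
  | congr_right _ _ ih => rw [icount_comp, icount_comp, ih]
  | minpos p q hp hq hpm hqm => rw [icount_eq_ite hsimp hp hpm hH, icount_eq_ite hsimp hq hqm hH]

theorem not_crosses_of_icount_eq_zero {x y : Chamber 𝒜} {p : Path 𝒜 x y} (hp : p.Positive)
    (h : p.icount H = 0) : ¬ p.Crosses H := by
  induction p with
  | nil _ => exact id
  | @cons x m y s p ih =>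
    cases s with
    | pos _ =>
      have hp' : p.Positive := hp
      have := icount_nonneg (H := H) hp'
      simp only [icount_cons, Step.sign] at h
      rintro (hsep | hc)
      · rw [if_pos hsep] at h
        omega
      · exact ih hp' (by split_ifs at h <;> omega) hc
    | neg _ => exact hp.elim

theorem mem_sepSet_of_crosses (hsimp : Simplicial 𝒜) {x y : Chamber 𝒜} {p : Path 𝒜 x y}
    (hp : p.Positive) (hmin : p.Minimal) (hH : H ∈ 𝒜.hyps) (hc : p.Crosses H) :
    H ∈ sepSet x y := by
  by_contra h
  exact not_crosses_of_icount_eq_zero hp (by rw [icount_eq_ite hsimp hp hmin hH, if_neg h]) hc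

theorem inFace_of_minimal (hsimp : Simplicial 𝒜) {G : Face 𝒜} {x y : Chamber 𝒜}
    (p : Path 𝒜 x y) (hx : G.vert x) (hxy : ∀ H ∈ sepSet x y, G.B ≤ H) (hp : p.Positive)
    (hmin : p.Minimal) : p.InFace G := by
  induction p with
  | nil _ => exact hx
  | @cons x m y s p ih =>
    cases s with
    | pos h =>
      obtain ⟨H₀, hH₀⟩ := adj_iff.1 h
      have hxm : ∀ H, H ∈ sepSet x m ↔ H = H₀ := by simp [hH₀]
      obtain ⟨hH₀hyps, hsep⟩ := mem_sepSet_iff_separates.1 ((hxm H₀).2 rfl)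
      have hB₀ : G.B ≤ H₀ := hxy H₀ (mem_sepSet_of_crosses hsimp hp hmin hH₀hyps (Or.inl hsep))
      have hm : G.vert m := Face.vert_iff.2 fun H hH hB => by
        have : ¬ (H ∈ sepSet x m) := fun h' => hB ((hxm H).1 h' ▸ hB₀)
        rw [mem_sepSet] at this
        have := Face.vert_iff.1 hx H hH hB
        tauto
      refine ⟨hx, ih hm (fun H hH => ?_) hp hmin.of_cons⟩
      rcases Finset.mem_union.1 (sepSet_subset_union m x y hH) with h' | h'
      · exact (hxm H).1 (sepSet_comm m x ▸ h') ▸ hB₀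
      · exact hxy H h'
    | neg _ => exact hp.elim

end Path

namespace Mor

theorem comp_assoc {w x y z : Chamber 𝒜} (f : Mor 𝒜 w x) (g : Mor 𝒜 x y) (h : Mor 𝒜 y z) :
    (f.comp g).comp h = f.comp (g.comp h) :=
  Quotient.inductionOn₃ f g h fun p q r => congrArg (⟦·⟧) (Path.comp_assoc p q r)

theorem one_comp {x y : Chamber 𝒜} (u : Mor 𝒜 x y) : Mor.comp (1 : Mor 𝒜 x x) u = u :=
  Quotient.inductionOn u fun _ => rfl

theorem comp_one {x y : Chamber 𝒜} (u : Mor 𝒜 x y) : u.comp (1 : Mor 𝒜 y y) = u :=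
  Quotient.inductionOn u fun p => congrArg (⟦·⟧) (Path.comp_nil p)

theorem pow_comp_eq_comp_pow {x x' : Chamber 𝒜} {a : Mor 𝒜 x x} {b : Mor 𝒜 x' x'}
    {u : Mor 𝒜 x x'} (h : a.comp u = u.comp b) (m : ℕ) : (a ^ m).comp u = u.comp (b ^ m) := by
  induction m with
  | zero => rw [pow_zero, pow_zero, one_comp, comp_one]
  | succ m ih =>
    rw [pow_succ, pow_succ]
    change ((a ^ m).comp a).comp u = u.comp ((b ^ m).comp b)
    rw [comp_assoc, h, ← comp_assoc, ih, comp_assoc]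

end Mor

namespace Mor

theorem comp_comp_symm {x y z : Chamber 𝒜} (a : Mor 𝒜 x y) (b : Mor 𝒜 y z) :
    (a.comp b).comp b.symm = a := by
  induction a using Quotient.inductionOn with | h p =>
  induction b using Quotient.inductionOn with | h q =>
  show (⟦(p.comp q).comp q.inv⟧ : Mor 𝒜 x y) = ⟦p⟧
  rw [Path.comp_assoc]
  exact (Quotient.sound (Rel.congr_left p (Rel.cancel q))).trans (by rw [Path.comp_nil])

def IsMinPos {x y : Chamber 𝒜} (φ : Mor 𝒜 x y) : Prop :=
  ∃ p : Path 𝒜 x y, p.Positive ∧ p.Minimal ∧ φ = ⟦p⟧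

theorem IsMinPos.eq {x y : Chamber 𝒜} {a b : Mor 𝒜 x y} (ha : a.IsMinPos) (hb : b.IsMinPos) :
    a = b := by
  obtain ⟨p, hp, hpm, rfl⟩ := ha
  obtain ⟨q, hq, hqm, rfl⟩ := hb
  exact Quotient.sound (Rel.minpos p q hp hq hpm hqm)

theorem IsMinPos.comp (hsimp : Simplicial 𝒜) {x y z : Chamber 𝒜} {a : Mor 𝒜 x y}
    {b : Mor 𝒜 y z} (ha : a.IsMinPos) (hb : b.IsMinPos)
    (hdisj : ∀ H ∈ sepSet x y, H ∉ sepSet y z) : (a.comp b).IsMinPos := by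
  obtain ⟨p, hp, hpm, rfl⟩ := ha
  obtain ⟨q, hq, hqm, rfl⟩ := hb
  exact ⟨p.comp q, hp.comp hq, hpm.comp hsimp hqm hdisj, rfl⟩

theorem exists_isMinPos (hsimp : Simplicial 𝒜) (x y : Chamber 𝒜) : ∃ a : Mor 𝒜 x y, a.IsMinPos := by
  obtain ⟨p, hp, hlen⟩ := exists_positive_path hsimp x y
  exact ⟨⟦p⟧, p, hp, Path.minimal_of_length_eq hlen, rfl⟩

end Mor

theorem IsGarside.isMinPos {G : Face 𝒜} {x y : Chamber 𝒜} {δ : Mor 𝒜 x y}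
    (h : IsGarside G δ) : δ.IsMinPos :=
  let ⟨_, p, hp, hpm, _, hδ⟩ := h
  ⟨p, hp, hpm, hδ⟩

theorem ParTrans.of_isAnt {F F' : Face 𝒜} {x x' z z' : Chamber 𝒜} (hxx' : ParTrans F F' x x')
    (hxz : IsAnt F x z) (hx'z' : IsAnt F' x' z') : ParTrans F F' z z' := by
  refine ⟨hxx'.1, hxz.2.1, hx'z'.2.1, fun H hH hB => ?_⟩
  rw [separates_iff hH]
  have h₁ := ((isAnt_iff.1 hxz).2.2 H hH).1 hB
  have h₂ := ((isAnt_iff.1 hx'z').2.2 H hH).1 (hxx'.1 ▸ hB)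
  have h₃ := hxx'.side_iff hH hB
  tauto

theorem IsGarside.isMinPos_comp (hsimp : Simplicial 𝒜) {F F' : Face 𝒜} {x z z' : Chamber 𝒜}
    {δ : Mor 𝒜 x z} {v : Mor 𝒜 z z'} (hδ : IsGarside F δ) (hzz' : ParTrans F F' z z')
    (hv : v.IsMinPos) : (δ.comp v).IsMinPos :=
  hδ.isMinPos.comp hsimp hv fun _ h₁ h₂ => hzz'.not_le_of_mem_sepSet h₂ (hδ.1.le_of_mem_sepSet h₁)

theorem ParTrans.isMinPos_comp (hsimp : Simplicial 𝒜) {F F' : Face 𝒜} {x x' z' : Chamber 𝒜}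
    {u : Mor 𝒜 x x'} {δ' : Mor 𝒜 x' z'} (hxx' : ParTrans F F' x x') (hu : u.IsMinPos)
    (hδ' : IsGarside F' δ') : (u.comp δ').IsMinPos :=
  hu.comp hsimp hδ'.isMinPos fun _ h₁ h₂ =>
    hxx'.not_le_of_mem_sepSet h₁ (hxx'.1 ▸ hδ'.1.le_of_mem_sepSet h₂)

theorem garside_comp_eq_comp_garside (hsimp : Simplicial 𝒜) {F F' : Face 𝒜}
    {x x' z z' : Chamber 𝒜} (hxx' : ParTrans F F' x x') (hzz' : ParTrans F F' z z')
    {δ : Mor 𝒜 x z} {δ' : Mor 𝒜 x' z'} {u : Mor 𝒜 x x'} {v : Mor 𝒜 z z'}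
    (hδ : IsGarside F δ) (hδ' : IsGarside F' δ') (hu : u.IsMinPos) (hv : v.IsMinPos) :
    δ.comp v = u.comp δ' :=
  (hδ.isMinPos_comp hsimp hzz' hv).eq (hxx'.isMinPos_comp hsimp hu hδ')

theorem IsElemSeg.garside_pow_comp (hsimp : Simplicial 𝒜) {F F' : Face 𝒜}
    {x x' z z' : Chamber 𝒜} {u : Mor 𝒜 x x'} (hu : IsElemSeg F F' u) {δ₁ : Mor 𝒜 x z}
    {δ₂ : Mor 𝒜 z x} {δ₁' : Mor 𝒜 x' z'} {δ₂' : Mor 𝒜 z' x'} (h₁ : IsGarside F δ₁)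
    (h₂ : IsGarside F δ₂) (h₁' : IsGarside F' δ₁') (h₂' : IsGarside F' δ₂') (m : ℕ) :
    ((δ₁.comp δ₂) ^ m).comp u = u.comp ((δ₁'.comp δ₂') ^ m) := by
  obtain ⟨-, hxx', hu⟩ := hu
  have hzz' := hxx'.of_isAnt h₁.1 h₁'.1
  obtain ⟨v, hv⟩ := Mor.exists_isMinPos hsimp z z'
  refine Mor.pow_comp_eq_comp_pow ?_ m
  rw [Mor.comp_assoc, garside_comp_eq_comp_garside hsimp hzz' hxx' h₂ h₂' hv hu,
    ← Mor.comp_assoc, garside_comp_eq_comp_garside hsimp hxx' hzz' h₁ h₁' hu hv, Mor.comp_assoc]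

theorem isGarside_mk (hsimp : Simplicial 𝒜) {G : Face 𝒜} {x y : Chamber 𝒜} (hxy : IsAnt G x y)
    {p : Path 𝒜 x y} (hp : p.Positive) (hpm : p.Minimal) : IsGarside G ⟦p⟧ :=
  ⟨hxy, p, hp, hpm, p.inFace_of_minimal hsimp hxy.1 (fun _ => hxy.le_of_mem_sepSet) hp hpm, rfl⟩

theorem exists_isGarside (hsimp : Simplicial 𝒜) {G : Face 𝒜} {x y : Chamber 𝒜}
    (hxy : IsAnt G x y) : ∃ δ : Mor 𝒜 x y, IsGarside G δ := by
  obtain ⟨p, hp, hlen⟩ := exists_positive_path hsimp x y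
  exact ⟨_, isGarside_mk hsimp hxy hp (Path.minimal_of_length_eq hlen)⟩

theorem IsElemSeg.not_crosses (hsimp : Simplicial 𝒜) {F F' : Face 𝒜} {x x' : Chamber 𝒜}
    {u : Mor 𝒜 x x'} (hu : IsElemSeg F F' u) {p : Path 𝒜 x x'} (hp : p.Positive)
    (hpu : u = ⟦p⟧) {H : Submodule ℝ A} (hH : DualEdge F H) : ¬ p.Crosses H := by
  obtain ⟨-, hxx', q, hq, hqm, rfl⟩ := hu
  refine Path.not_crosses_of_icount_eq_zero hp ?_
  rw [Path.icount_eq_of_rel hsimp (Quotient.exact hpu.symm) hH.1,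
    Path.icount_eq_ite hsimp hq hqm hH.1, if_neg fun h => hxx'.not_le_of_mem_sepSet h hH.B_le]

namespace ParallelFacets

variable {F F' F₀ : Face 𝒜}

theorem adjFaces (hP : ParallelFacets F F' F₀) : AdjFaces F F' :=
  ⟨hP.ne, hP.B_eq, F₀, hP.le_left, hP.le_right, hP.finrank_eq⟩

theorem parTrans_of_isAnt (hP : ParallelFacets F F' F₀) {x y v' : Chamber 𝒜} (hx : F.vert x)
    (hxy : IsAnt F₀ x y) (hv'y : IsAnt F' v' y) : ParTrans F F' x v' := by
  refine ⟨hP.B_eq, hx, hv'y.1, fun H hH hB => ?_⟩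
  rw [separates_iff hH]
  have h₁ := ((isAnt_iff.1 hxy).2.2 H hH).1 (hP.le_left.B_le_of_le hH hB)
  have h₂ := ((isAnt_iff.1 hv'y).2.2 H hH).1 (hP.B_eq ▸ hB)
  tauto

theorem isElemSeg_comp_symm (hsimp : Simplicial 𝒜) (hP : ParallelFacets F F' F₀)
    {x y v' : Chamber 𝒜} (hx : F.vert x) {δ₀ : Mor 𝒜 x y} {δ' : Mor 𝒜 v' y}
    (h₀ : IsGarside F₀ δ₀) (h' : IsGarside F' δ') : IsElemSeg F F' (δ₀.comp δ'.symm) := by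
  have hxv' := hP.parTrans_of_isAnt hx h₀.1 h'.1
  obtain ⟨u, hu⟩ := Mor.exists_isMinPos hsimp x v'
  rw [h₀.isMinPos.eq (hxv'.isMinPos_comp hsimp hu h'), Mor.comp_comp_symm]
  exact ⟨hP.adjFaces, hxv', hu⟩

theorem exists_eq_comp_symm (hsimp : Simplicial 𝒜) (hP : ParallelFacets F F' F₀)
    {x x' : Chamber 𝒜} {u : Mor 𝒜 x x'} (hu : IsElemSeg F F' u) :
    ∃ (y : Chamber 𝒜) (δ₀ : Mor 𝒜 x y) (δ' : Mor 𝒜 x' y),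
      IsGarside F₀ δ₀ ∧ IsGarside F' δ' ∧ u = δ₀.comp δ'.symm := by
  obtain ⟨-, hxx', hu⟩ := hu
  obtain ⟨y, hxy⟩ := exists_isAnt (hP.le_left x hxx'.2.1)
  obtain ⟨δ₀, h₀⟩ := exists_isGarside hsimp hxy
  obtain ⟨δ', h'⟩ := exists_isGarside hsimp (hP.isAnt_of_parTrans hxx' hxy)
  refine ⟨y, δ₀, δ', h₀, h', ?_⟩
  rw [h₀.isMinPos.eq (hxx'.isMinPos_comp hsimp hu h'), Mor.comp_comp_symm]

end ParallelFacets

end DelGrpd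

open DelGrpd in
/-- Let `F` and `F'` be adjacent parallel faces of `Z(𝒜)` dual to `B`,
both contained in the face `F₀` with `dim F₀ = dim F + 1`.  Then:
(1) for any vertex `x ∈ F`, the antipodal vertex `yy = Ant(x, F₀)` lies in `F'` and
`Δ_x(F₀) (Δ^{yy}(F'))⁻¹` is an elementary `B`-segment; conversely every elementary
`B`-segment from `F` to `F'` has this form;
(2) if `u` is an elementary `B`-segment with source `x` and target `x'`, then
`(Δ_x(F))^k u = u (Δ_{x'}(F'))^k` for every positive even integer `k = 2m`;
(3) a positive path representing an elementary `B`-segment crosses no hyperplane dual to an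
edge of `F`. -/
theorem statement_12 {A : Type} [NormedAddCommGroup A] [InnerProductSpace ℝ A]
    [FiniteDimensional ℝ A] (𝒜 : RealArr A) (hsimp : Simplicial 𝒜)
    (B : Submodule ℝ A) (F F' F₀ : Face 𝒜)
    (hFB : F.B = B) (hF'B : F'.B = B) (hne : F ≠ F')
    (hFF₀ : F.le F₀) (hF'F₀ : F'.le F₀)
    (hdim : Module.finrank ℝ F.B = Module.finrank ℝ F₀.B + 1) :
    -- (1) elementary segments are exactly `Δ_x(F₀) (Δ^{yy}(F'))⁻¹`
    ((∀ (x yy : Chamber 𝒜), F.vert x → IsAnt F₀ x yy →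
        F'.vert yy ∧
        ∀ (v' : Chamber 𝒜) (δ₀ : Mor 𝒜 x yy) (δ' : Mor 𝒜 v' yy),
          IsGarside F₀ δ₀ → IsGarside F' δ' →
          IsElemSeg F F' (δ₀.comp δ'.symm)) ∧
      (∀ (x x' : Chamber 𝒜) (u : Mor 𝒜 x x'), IsElemSeg F F' u →
        ∃ (yy : Chamber 𝒜) (δ₀ : Mor 𝒜 x yy) (δ' : Mor 𝒜 x' yy),
          IsGarside F₀ δ₀ ∧ IsGarside F' δ' ∧ u = δ₀.comp δ'.symm)) ∧
    -- (2) elementary segments conjugate even powers of the Garside elements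
    (∀ (x x' : Chamber 𝒜) (u : Mor 𝒜 x x'), IsElemSeg F F' u →
      ∀ (z z' : Chamber 𝒜) (δ₁ : Mor 𝒜 x z) (δ₂ : Mor 𝒜 z x)
        (δ₁' : Mor 𝒜 x' z') (δ₂' : Mor 𝒜 z' x'),
        IsGarside F δ₁ → IsGarside F δ₂ → IsGarside F' δ₁' → IsGarside F' δ₂' →
        ∀ m : ℕ, 0 < m →
          ((δ₁.comp δ₂) ^ m).comp u = u.comp ((δ₁'.comp δ₂') ^ m)) ∧
    -- (3) elementary segments do not cross hyperplanes dual to edges of `F`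
    (∀ (x x' : Chamber 𝒜) (u : Mor 𝒜 x x'), IsElemSeg F F' u →
      ∀ p : Path 𝒜 x x', p.Positive → u = ⟦p⟧ →
        ∀ H : Submodule ℝ A, DualEdge F H → ¬ p.Crosses H) := by
  have hP : ParallelFacets F F' F₀ := ⟨hFB.trans hF'B.symm, hne, hFF₀, hF'F₀, hdim⟩
  refine ⟨⟨fun x y hx hxy => ⟨hP.vert_of_isAnt hx hxy, ?_⟩, ?_⟩, ?_, ?_⟩
  · exact fun _ _ _ h₀ h' => hP.isElemSeg_comp_symm hsimp hx h₀ h'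
  · exact fun _ _ _ hu => hP.exists_eq_comp_symm hsimp hu
  · exact fun _ _ _ hu _ _ _ _ _ _ h₁ h₂ h₁' h₂' m _ => hu.garside_pow_comp hsimp h₁ h₂ h₁' h₂' m
  · exact fun _ _ _ hu _ hp hpu _ hH => hu.not_crosses hsimp hp hpu hH
end
end
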